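/- arXiv:1807.03970 — 7 statements merged into one kernel-verified Lean document; each statement's English description precedes it below -/
import Mathlib

section
/- Let P = P* ⊔ C ⊔ O be a partition of a finite poset P with min(P) ⊆ P*. A point x = (λ, x_C, x_O) ∈ ℝ^P lies in the marked chain-order polyhedron O_{C,O}(P,λ) if and only if x_O lies in the marked order polyhedron O(P \ C, λ) of the induced subposet P \ C with marked elements P*, and x_C lies in the marked chain polyhedron C(P, λ ⊔ x_O) of P with marked elements P* ⊔ O and marking given by λ on P* and x_O on O. -/
/-!
Marking the elements of `O` by the point itself turns `O_{C,O}(P,λ)` into the marked chain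
polyhedron verbatim. The remaining content is that nonnegativity on `C` together with the chain
inequalities forces `x` to be order-preserving on `P ∖ C`: in a finite poset every relation
`p ≤ q` is realised by a chain of covers, which splits at its elements outside `C` into
saturated chains through `C`.
-/

open Pointwise

open scoped Classical

/-- A saturated chain `a ≺ p₁ ≺ ⋯ ≺ p_r ≺ b` with all interior elements in `C`. -/
def SatChain {P : Type*} [PartialOrder P] (C : Set P) (a b : P) (l : List P) : Prop :=
  (∀ p ∈ l, p ∈ C) ∧ List.Chain' (· ⋖ ·) (a :: (l ++ [b]))

/-- The marked chain-order polyhedron `O_{C,O}(P,λ) ⊆ ℝ^P`. -/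
def MCO {P : Type*} [PartialOrder P] (Pstar C O : Set P) (lam : P → ℝ) : Set (P → ℝ) :=
  {x | (∀ a ∈ Pstar, x a = lam a) ∧ (∀ p ∈ C, 0 ≤ x p) ∧
    ∀ a b l, a ∈ Pstar ∪ O → b ∈ Pstar ∪ O → SatChain C a b l →
      (l.map x).sum ≤ x b - x a}

/-- The marked order polyhedron `O(Q,μ) ⊆ ℝ^Q`. -/
def MO {Q : Type*} [PartialOrder Q] (Qstar : Set Q) (mu : Q → ℝ) : Set (Q → ℝ) :=
  {x | (∀ a ∈ Qstar, x a = mu a) ∧ ∀ p q : Q, p ≤ q → x p ≤ x q}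

section SatChain

variable {P : Type*} [PartialOrder P] {C : Set P} {x : P → ℝ}

lemma SatChain.of_covBy {a b : P} (h : a ⋖ b) : SatChain C a b [] :=
  ⟨by simp, List.isChain_pair.mpr h⟩

lemma SatChain.snoc {a b c : P} {l : List P} (h : SatChain C a b l) (hb : b ∈ C) (hbc : b ⋖ c) :
    SatChain C a c (l ++ [b]) := by
  refine ⟨by simpa [or_imp, forall_and] using And.intro h.1 hb, ?_⟩
  rw [List.append_assoc, List.singleton_append]
  exact List.isChain_cons_split.mpr ⟨h.2, List.isChain_pair.mpr hbc⟩

lemma SatChain.le_of_sum_le {a b : P} {l : List P} (h : SatChain C a b l)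
    (hC : ∀ p ∈ C, 0 ≤ x p) (hsum : (l.map x).sum ≤ x b - x a) : x a ≤ x b := by
  have : 0 ≤ (l.map x).sum :=
    List.sum_nonneg (by simpa using fun p hp => hC p (h.1 p hp))
  linarith

/- Walking up a chain of covers from `a`, we keep track of the last element `r ∉ C` passed;
the chain inequality from `r` to the next element outside `C` gives monotonicity. -/
theorem monotoneOn_compl_of_satChain [LocallyFiniteOrder P] (hC : ∀ p ∈ C, 0 ≤ x p)
    (hsat : ∀ a b l, a ∉ C → b ∉ C → SatChain C a b l → (l.map x).sum ≤ x b - x a) :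
    MonotoneOn x Cᶜ := by
  intro a ha b hb hab
  have key : ∀ q, Relation.ReflTransGen (· ⋖ ·) a q →
      ∃ r ∉ C, x a ≤ x r ∧ (r = q ∨ ∃ l, SatChain C r q l) := by
    intro q hq
    induction hq with
    | refl => exact ⟨a, ha, le_rfl, Or.inl rfl⟩
    | @tail q q' _ hqq' ih =>
      obtain ⟨r, hr, har, rfl | ⟨l, hl⟩⟩ := ih
      · exact ⟨r, hr, har, Or.inr ⟨[], .of_covBy hqq'⟩⟩
      · by_cases hq : q ∈ C
        · exact ⟨r, hr, har, Or.inr ⟨l ++ [q], hl.snoc hq hqq'⟩⟩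
        · have hrq : x r ≤ x q := hl.le_of_sum_le hC (hsat r q l hr hq hl)
          exact ⟨q, hq, har.trans hrq, Or.inr ⟨[], .of_covBy hqq'⟩⟩
  obtain ⟨r, hr, har, rfl | ⟨l, hl⟩⟩ := key b (le_iff_reflTransGen_covBy.mp hab)
  · exact har
  · exact har.trans (hl.le_of_sum_le hC (hsat r b l hr hb hl))

end SatChain

lemma mem_MCO_iff_mem_MCO_union {P : Type*} [PartialOrder P] (Pstar C O : Set P)
    (lam x : P → ℝ) :
    x ∈ MCO Pstar C O lam ↔
      x ∈ MCO (Pstar ∪ O) C ∅ (fun p => if p ∈ Pstar then lam p else x p) := by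
  simp only [MCO, Set.union_empty]
  refine and_congr ⟨fun h a _ => ?_, fun h a ha => ?_⟩ Iff.rfl
  · split_ifs with ha
    exacts [h a ha, rfl]
  · simpa [ha] using h a (Or.inl ha)

lemma monotoneOn_compl_of_mem_MCO {P : Type*} [PartialOrder P] [LocallyFiniteOrder P]
    {Pstar C O : Set P} {lam x : P → ℝ} (hcover : Pstarᶜ ⊆ C ∪ O)
    (hx : x ∈ MCO Pstar C O lam) : MonotoneOn x Cᶜ := by
  have hcompl : ∀ p, p ∉ C → p ∈ Pstar ∪ O := fun p hp =>
    (em (p ∈ Pstar)).imp id fun hp' => (hcover hp').resolve_left hp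
  exact monotoneOn_compl_of_satChain hx.2.1
    fun a b l ha hb hl => hx.2.2 a b l (hcompl a ha) (hcompl b hb) hl

theorem mco_fibered_general {P : Type*} [PartialOrder P] [Fintype P]
    (Pstar C O : Set P) (lam : P → ℝ)
    (hcover : C ∪ O = Pstarᶜ)
    (x : P → ℝ) :
    x ∈ MCO Pstar C O lam ↔
      ((fun q : {p : P // p ∉ C} => x q.1) ∈
          MO {q : {p : P // p ∉ C} | (q : P) ∈ Pstar} (fun q => lam q.1)) ∧
      x ∈ MCO (Pstar ∪ O) C ∅ (fun p => if p ∈ Pstar then lam p else x p) := by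
  let _ : LocallyFiniteOrder P := Fintype.toLocallyFiniteOrder
  rw [← mem_MCO_iff_mem_MCO_union]
  refine ⟨fun hx => ⟨⟨fun a ha => hx.1 a ha, fun p q hpq => ?_⟩, hx⟩, And.right⟩
  exact monotoneOn_compl_of_mem_MCO hcover.ge hx p.2 q.2 hpq

/-- `x = (λ, x_C, x_O)` lies in `O_{C,O}(P,λ)` iff `x_O` lies in the marked
order polyhedron of the induced subposet `P ∖ C` (marked elements `P*`, marking `λ`) and
`x_C` lies in the marked chain polyhedron of `P` with marked elements `P* ⊔ O` and marking
`λ ⊔ x_O` (the chain polyhedron being `O_{C,∅}` for this enlarged marked set). -/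
theorem mco_fibered {P : Type*} [PartialOrder P] [Fintype P]
    (Pstar C O : Set P) (lam : P → ℝ)
    (hmin : ∀ p : P, IsMin p → p ∈ Pstar)
    (hlam : MonotoneOn lam Pstar)
    (hcover : C ∪ O = Pstarᶜ) (hdisj : Disjoint C O)
    (x : P → ℝ) :
    x ∈ MCO Pstar C O lam ↔
      ((fun q : {p : P // p ∉ C} => x q.1) ∈
          MO {q : {p : P // p ∉ C} | (q : P) ∈ Pstar} (fun q => lam q.1)) ∧
      x ∈ MCO (Pstar ∪ O) C ∅ (fun p => if p ∈ Pstar then lam p else x p) :=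
  mco_fibered_general Pstar C O lam hcover x
end

section
/- Let P be a finite poset with marked elements P* ⊇ min(P), let I be a chain of order ideals in P*, and let λ, μ: P* → ℝ be two markings lying in the cone L(P*, I) (i.e., each is constant on the successive differences of the chain I and weakly increasing along it). Then for any partition of the unmarked elements into C ⊔ O, O_{C,O}(P, λ+μ) = O_{C,O}(P,λ) + O_{C,O}(P,μ) (Minkowski sum). Moreover if λ and μ are integral, the same equality holds for the sets of lattice points. -/
open Pointwise

/-- Membership in the cone `L(P*, I)` for a chain of order ideals
`∅ = I 0 ⊊ I 1 ⊊ ⋯ ⊊ I k ⊊ I (k+1) = P*`: order-preserving maps which are constant on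
each difference `I (j+1) ∖ I j` and weakly increasing along the chain. -/
def InConeChain {P : Type*} [PartialOrder P] (Pstar : Set P) (I : ℕ → Set P) (k : ℕ)
    (f : P → ℝ) : Prop :=
  MonotoneOn f Pstar ∧
  (∀ j ≤ k, ∀ a ∈ I (j + 1) \ I j, ∀ b ∈ I (j + 1) \ I j, f a = f b) ∧
  (∀ j j', j ≤ j' → j' ≤ k → ∀ a ∈ I (j + 1) \ I j, ∀ b ∈ I (j' + 1) \ I j', f a ≤ f b)

/-!
The transfer map `orderCoords` sends the marked chain-order polyhedron onto the marked order
polyhedron (order-preserving extensions of the marking); its inverse `chainCoords` subtracts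
from each coordinate in `C` the maximum over the lower covers. Given `x` with marking `λ + μ`
and order coordinates `u`, put `g t = max_a min (λ a) (t - μ a)` (`splitFst`). Because `λ` and
`μ` increase along the same chain of ideals, `g (λ a + μ a) = λ a` on `P*`, and both `g` and
`t ↦ t - g t` are monotone. So `g ∘ u` and `u - g ∘ u` are order coordinates for the markings
`λ` and `μ`, and since monotone maps commute with the maxima in `chainCoords`, their chain
coordinates add up to `x`. All these operations preserve any additive subgroup of `ℝ`, in
particular `ℤ`.
-/

attribute [local instance] WellFoundedLT.toWellFoundedRelation

theorem Real.iSup_mem_addSubgroup {ι : Type*} [Finite ι] (A : AddSubgroup ℝ) {f : ι → ℝ}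
    (hf : ∀ i, f i ∈ A) : ⨆ i, f i ∈ A := by
  rcases isEmpty_or_nonempty ι with hι | hι
  · rw [Real.iSup_of_isEmpty]
    exact A.zero_mem
  · obtain ⟨i, hi⟩ := exists_eq_ciSup_of_finite (f := f)
    exact hi ▸ hf i

theorem Monotone.map_ciSup_of_finite {ι α β : Type*} [Finite ι] [Nonempty ι]
    [ConditionallyCompleteLinearOrder α] [ConditionallyCompleteLattice β] {f : α → β}
    (hf : Monotone f) (g : ι → α) : f (⨆ i, g i) = ⨆ i, f (g i) := by
  rw [iSup, Set.Finite.map_sSup_of_monotone hf (Set.range_nonempty g) (Set.finite_range g),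
    ← Set.range_comp]
  rfl

section Split

variable {ι : Type*} [Finite ι] (l m : ι → ℝ)

noncomputable def splitFst (t : ℝ) : ℝ := ⨆ i, min (l i) (t - m i)

theorem splitFst_mono : Monotone (splitFst l m) := fun _ _ hts =>
  ciSup_mono (Set.finite_range _).bddAbove fun _ => min_le_min_left _ (sub_le_sub_right hts _)

theorem splitFst_le_add {t s : ℝ} (hts : t ≤ s) :
    splitFst l m s ≤ splitFst l m t + (s - t) := by
  rcases isEmpty_or_nonempty ι with hι | hι
  · simp [splitFst, Real.iSup_of_isEmpty, hts]
  refine ciSup_le fun i => ?_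
  calc min (l i) (s - m i) ≤ min (l i) (t - m i) + (s - t) := by
        rw [← min_add_add_right]
        exact min_le_min (by linarith) (by linarith)
    _ ≤ splitFst l m t + (s - t) := by
        gcongr
        exact le_ciSup (Set.finite_range fun i => min (l i) (t - m i)).bddAbove i

theorem monotone_sub_splitFst : Monotone fun t => t - splitFst l m t := fun t s hts => by
  linarith [splitFst_le_add l m hts]

theorem splitFst_add_eq (hlm : ∀ i j, l i ≤ l j ∨ m j ≤ m i) (j : ι) :
    splitFst l m (l j + m j) = l j := by
  have : Nonempty ι := ⟨j⟩
  refine le_antisymm (ciSup_le fun i => ?_) ?_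
  · rcases hlm i j with h | h
    · exact (min_le_left _ _).trans h
    · exact (min_le_right _ _).trans (by linarith)
  · calc l j = min (l j) (l j + m j - m j) := by simp
      _ ≤ splitFst l m (l j + m j) :=
        le_ciSup (Set.finite_range fun i => min (l i) (l j + m j - m i)).bddAbove j

theorem splitFst_mem_addSubgroup (A : AddSubgroup ℝ) (hl : ∀ i, l i ∈ A) (hm : ∀ i, m i ∈ A)
    {t : ℝ} (ht : t ∈ A) : splitFst l m t ∈ A :=
  Real.iSup_mem_addSubgroup A fun i => by
    rcases min_choice (l i) (t - m i) with h | h <;> rw [h]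
    exacts [hl i, A.sub_mem ht (hm i)]

end Split

section Chains

variable {P : Type*} [PartialOrder P] {C : Set P}

theorem satChain_iff {a b : P} {l : List P} :
    SatChain C a b l ↔ (∀ p ∈ l, p ∈ C) ∧ List.IsChain (· ⋖ ·) (a :: (l ++ [b])) := Iff.rfl

@[simp] theorem satChain_nil {a b : P} : SatChain C a b [] ↔ a ⋖ b := by
  simp [satChain_iff]

@[simp] theorem satChain_cons {a b p : P} {l : List P} :
    SatChain C a b (p :: l) ↔ a ⋖ p ∧ p ∈ C ∧ SatChain C p b l := by
  simp only [satChain_iff, List.mem_cons, forall_eq_or_imp, List.cons_append,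
    List.isChain_cons_cons]
  tauto

end Chains

open Classical in
/-- The transfer map to the marked order polytope: on `C` it adds up `x` along the heaviest
saturated chain coming up from `Cᶜ`. -/
noncomputable def orderCoords {P : Type*} [PartialOrder P] [Finite P] (C : Set P)
    (x : P → ℝ) (p : P) : ℝ :=
  x p + if p ∈ C then ⨆ q : {q // q ⋖ p}, orderCoords C x q else 0
termination_by p
decreasing_by exact q.2.lt

open Classical in
noncomputable def chainCoords {P : Type*} [PartialOrder P] (C : Set P) (u : P → ℝ) (p : P) :
    ℝ :=
  u p - if p ∈ C then ⨆ q : {q // q ⋖ p}, u q else 0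

/-- Monotonicity is only asked along cover relations, which in a finite poset is the same as
being order preserving. -/
def markedOrderPolytope {P : Type*} [PartialOrder P] (Pstar : Set P) (L : P → ℝ) :
    Set (P → ℝ) :=
  {u | (∀ a ∈ Pstar, u a = L a) ∧ ∀ p q, p ⋖ q → u p ≤ u q}

section Transfer

variable {P : Type*} [PartialOrder P] {Pstar C O : Set P} {L : P → ℝ}

theorem comp_mem_markedOrderPolytope {u : P → ℝ} {G : ℝ → ℝ} {L' : P → ℝ}
    (hu : u ∈ markedOrderPolytope Pstar L) (hG : Monotone G)
    (hGL : ∀ a ∈ Pstar, G (L a) = L' a) : G ∘ u ∈ markedOrderPolytope Pstar L' :=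
  ⟨fun a ha => by simp [hu.1 a ha, hGL a ha], fun p q hpq => hG (hu.2 p q hpq)⟩

theorem chainCoords_of_mem {u : P → ℝ} {p : P} (hp : p ∈ C) :
    chainCoords C u p = u p - ⨆ q : {q // q ⋖ p}, u q := by
  rw [chainCoords, if_pos hp]

theorem chainCoords_of_notMem {u : P → ℝ} {p : P} (hp : p ∉ C) : chainCoords C u p = u p := by
  rw [chainCoords, if_neg hp, sub_zero]

variable [Finite P]

theorem orderCoords_of_mem {x : P → ℝ} {p : P} (hp : p ∈ C) :
    orderCoords C x p = x p + ⨆ q : {q // q ⋖ p}, orderCoords C x q := by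
  rw [orderCoords, if_pos hp]

theorem orderCoords_of_notMem {x : P → ℝ} {p : P} (hp : p ∉ C) : orderCoords C x p = x p := by
  rw [orderCoords, if_neg hp, add_zero]

theorem chainCoords_orderCoords (x : P → ℝ) : chainCoords C (orderCoords C x) = x := by
  funext p
  by_cases hp : p ∈ C
  · rw [chainCoords_of_mem hp, orderCoords_of_mem hp, add_sub_cancel_right]
  · rw [chainCoords_of_notMem hp, orderCoords_of_notMem hp]

theorem orderCoords_add_sum_le {x : P → ℝ} (hx : x ∈ MCO Pstar C O L) (hC : Cᶜ ⊆ Pstar ∪ O)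
    (hCne : ∀ p ∈ C, ∃ q, q ⋖ p) {q b : P} {l : List P} (hb : b ∈ Pstar ∪ O)
    (hqb : SatChain C q b l) : orderCoords C x q + (l.map x).sum ≤ x b := by
  induction q using WellFoundedLT.induction generalizing l with
  | _ q ih =>
  by_cases hq : q ∈ C
  · obtain ⟨q', hq'q⟩ := hCne q hq
    have : Nonempty {r // r ⋖ q} := ⟨⟨q', hq'q⟩⟩
    obtain ⟨⟨r, hrq⟩, hr⟩ :=
      exists_eq_ciSup_of_finite (f := fun r : {r // r ⋖ q} => orderCoords C x r)
    have := ih r hrq.lt (satChain_cons.2 ⟨hrq, hq, hqb⟩)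
    rw [orderCoords_of_mem hq, ← hr]
    simp only [List.map_cons, List.sum_cons] at this
    linarith
  · rw [orderCoords_of_notMem hq]
    linarith [hx.2.2 q b l (hC hq) hb hqb]

theorem orderCoords_mem_markedOrderPolytope {x : P → ℝ} (hx : x ∈ MCO Pstar C O L)
    (hC : Cᶜ = Pstar ∪ O) (hCne : ∀ p ∈ C, ∃ q, q ⋖ p) :
    orderCoords C x ∈ markedOrderPolytope Pstar L := by
  have hnotC : ∀ {p}, p ∈ Pstar ∪ O → p ∉ C := fun hp => hC.symm.subset hp
  refine ⟨fun a ha => ?_, fun q p hqp => ?_⟩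
  · rw [orderCoords_of_notMem (hnotC (Or.inl ha)), hx.1 a ha]
  by_cases hp : p ∈ C
  · rw [orderCoords_of_mem hp]
    linarith [hx.2.1 p hp, le_ciSup (Set.finite_range fun r : {r // r ⋖ p} =>
      orderCoords C x r).bddAbove ⟨q, hqp⟩]
  · simpa [orderCoords_of_notMem hp] using
      orderCoords_add_sum_le hx hC.subset hCne (hC.subset hp) (satChain_nil.2 hqp)

theorem add_sum_chainCoords_le {u : P → ℝ} (hu : ∀ p q, p ⋖ q → u p ≤ u q) {a b : P}
    {l : List P} (hab : SatChain C a b l) : u a + (l.map (chainCoords C u)).sum ≤ u b := by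
  induction l generalizing a with
  | nil => simpa using hu a b (satChain_nil.1 hab)
  | cons p l ih =>
    obtain ⟨hap, hp, hpb⟩ := satChain_cons.1 hab
    have := le_ciSup (Set.finite_range fun q : {q // q ⋖ p} => u q).bddAbove ⟨a, hap⟩
    simp only [List.map_cons, List.sum_cons, chainCoords_of_mem hp]
    linarith [ih hpb]

theorem chainCoords_mem_mco {u : P → ℝ} (hu : u ∈ markedOrderPolytope Pstar L)
    (hC : Cᶜ = Pstar ∪ O) (hCne : ∀ p ∈ C, ∃ q, q ⋖ p) : chainCoords C u ∈ MCO Pstar C O L := by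
  have hnotC : ∀ {p}, p ∈ Pstar ∪ O → p ∉ C := fun hp => hC.symm.subset hp
  refine ⟨fun a ha => ?_, fun p hp => ?_, fun a b l ha hb hab => ?_⟩
  · rw [chainCoords_of_notMem (hnotC (Or.inl ha)), hu.1 a ha]
  · obtain ⟨q, hqp⟩ := hCne p hp
    have : Nonempty {q // q ⋖ p} := ⟨⟨q, hqp⟩⟩
    rw [chainCoords_of_mem hp, sub_nonneg]
    exact ciSup_le fun q => hu.2 _ _ q.2
  · rw [chainCoords_of_notMem (hnotC ha), chainCoords_of_notMem (hnotC hb)]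
    linarith [add_sum_chainCoords_le hu.2 hab]

theorem chainCoords_comp_add_chainCoords_comp (hCne : ∀ p ∈ C, ∃ q, q ⋖ p) {G H : ℝ → ℝ}
    (hG : Monotone G) (hH : Monotone H) (hGH : ∀ t, G t + H t = t) (u : P → ℝ) :
    chainCoords C (G ∘ u) + chainCoords C (H ∘ u) = chainCoords C u := by
  funext p
  by_cases hp : p ∈ C
  · obtain ⟨q, hqp⟩ := hCne p hp
    have : Nonempty {q // q ⋖ p} := ⟨⟨q, hqp⟩⟩
    simp only [Pi.add_apply, chainCoords_of_mem hp, Function.comp_apply,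
      ← hG.map_ciSup_of_finite, ← hH.map_ciSup_of_finite]
    linarith [hGH (u p), hGH (⨆ q : {q // q ⋖ p}, u q)]
  · simp [chainCoords_of_notMem hp, hGH]

theorem orderCoords_mem_addSubgroup (A : AddSubgroup ℝ) {x : P → ℝ} (hx : ∀ p, x p ∈ A)
    (p : P) : orderCoords C x p ∈ A := by
  induction p using WellFoundedLT.induction with
  | _ p ih =>
  by_cases hp : p ∈ C
  · rw [orderCoords_of_mem hp]
    exact A.add_mem (hx p) (Real.iSup_mem_addSubgroup A fun q => ih q q.2.lt)
  · rw [orderCoords_of_notMem hp]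
    exact hx p

theorem chainCoords_mem_addSubgroup (A : AddSubgroup ℝ) {u : P → ℝ} (hu : ∀ p, u p ∈ A)
    (p : P) : chainCoords C u p ∈ A := by
  by_cases hp : p ∈ C
  · rw [chainCoords_of_mem hp]
    exact A.sub_mem (hu p) (Real.iSup_mem_addSubgroup A fun q => hu q)
  · rw [chainCoords_of_notMem hp]
    exact hu p

end Transfer

section Minkowski

variable {P : Type*} [PartialOrder P] {Pstar C O : Set P}

theorem add_mem_mco {lam mu y z : P → ℝ} (hy : y ∈ MCO Pstar C O lam)
    (hz : z ∈ MCO Pstar C O mu) : y + z ∈ MCO Pstar C O (lam + mu) := by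
  refine ⟨fun a ha => ?_, fun p hp => add_nonneg (hy.2.1 p hp) (hz.2.1 p hp),
    fun a b l ha hb hab => ?_⟩
  · simp [hy.1 a ha, hz.1 a ha]
  · rw [show y + z = fun p => y p + z p from rfl, List.sum_map_add]
    linarith [hy.2.2 a b l ha hb hab, hz.2.2 a b l ha hb hab]

theorem mco_subset_add [Finite P] (A : AddSubgroup ℝ) (hC : Cᶜ = Pstar ∪ O)
    (hCne : ∀ p ∈ C, ∃ q, q ⋖ p) {lam mu : P → ℝ}
    (hco : ∀ a ∈ Pstar, ∀ b ∈ Pstar, lam a ≤ lam b ∨ mu b ≤ mu a)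
    (hlam : ∀ a ∈ Pstar, lam a ∈ A) (hmu : ∀ a ∈ Pstar, mu a ∈ A) :
    {x ∈ MCO Pstar C O (lam + mu) | ∀ p, x p ∈ A} ⊆
      {x ∈ MCO Pstar C O lam | ∀ p, x p ∈ A} + {x ∈ MCO Pstar C O mu | ∀ p, x p ∈ A} := by
  rintro x ⟨hx, hxA⟩
  set l : Pstar → ℝ := fun a => lam a
  set m : Pstar → ℝ := fun a => mu a
  set g := splitFst l m
  set h : ℝ → ℝ := fun t => t - g t
  have hgl : ∀ a ∈ Pstar, g ((lam + mu) a) = lam a := fun a ha =>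
    splitFst_add_eq l m (fun i j => hco i i.2 j j.2) ⟨a, ha⟩
  have hhm : ∀ a ∈ Pstar, h ((lam + mu) a) = mu a := fun a ha => by
    show (lam + mu) a - g ((lam + mu) a) = mu a
    rw [hgl a ha, Pi.add_apply, add_sub_cancel_left]
  have hu := orderCoords_mem_markedOrderPolytope hx hC hCne
  have huA := orderCoords_mem_addSubgroup (C := C) A hxA
  have hgA : ∀ t ∈ A, g t ∈ A :=
    fun t ht => splitFst_mem_addSubgroup l m A (fun i => hlam i i.2) (fun i => hmu i i.2) ht
  refine ⟨chainCoords C (g ∘ orderCoords C x),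
    ⟨chainCoords_mem_mco (comp_mem_markedOrderPolytope hu (splitFst_mono l m) hgl) hC hCne,
      chainCoords_mem_addSubgroup A fun p => hgA _ (huA p)⟩,
    chainCoords C (h ∘ orderCoords C x),
    ⟨chainCoords_mem_mco (comp_mem_markedOrderPolytope hu (monotone_sub_splitFst l m) hhm)
      hC hCne, chainCoords_mem_addSubgroup A fun p => A.sub_mem (huA p) (hgA _ (huA p))⟩, ?_⟩
  exact (chainCoords_comp_add_chainCoords_comp hCne (splitFst_mono l m)
    (monotone_sub_splitFst l m) (fun t => add_sub_cancel _ t) _).trans (chainCoords_orderCoords x)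

theorem mco_add_eq [Finite P] (A : AddSubgroup ℝ) (hC : Cᶜ = Pstar ∪ O)
    (hCne : ∀ p ∈ C, ∃ q, q ⋖ p) {lam mu : P → ℝ}
    (hco : ∀ a ∈ Pstar, ∀ b ∈ Pstar, lam a ≤ lam b ∨ mu b ≤ mu a)
    (hlam : ∀ a ∈ Pstar, lam a ∈ A) (hmu : ∀ a ∈ Pstar, mu a ∈ A) :
    {x ∈ MCO Pstar C O (lam + mu) | ∀ p, x p ∈ A} =
      {x ∈ MCO Pstar C O lam | ∀ p, x p ∈ A} + {x ∈ MCO Pstar C O mu | ∀ p, x p ∈ A} := by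
  refine (mco_subset_add A hC hCne hco hlam hmu).antisymm ?_
  rintro _ ⟨y, ⟨hy, hyA⟩, z, ⟨hz, hzA⟩, rfl⟩
  exact ⟨add_mem_mco hy hz, fun p => A.add_mem (hyA p) (hzA p)⟩

end Minkowski

theorem exists_lt_mem_succ_diff {α : Type*} {s : ℕ → Set α} {a : α} (h0 : a ∉ s 0) :
    ∀ {n}, a ∈ s n → ∃ j < n, a ∈ s (j + 1) \ s j
  | 0, hn => absurd hn h0
  | n + 1, hn => by
    by_cases ha : a ∈ s n
    · obtain ⟨j, hj, hmem⟩ := exists_lt_mem_succ_diff h0 ha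
      exact ⟨j, hj.trans n.lt_succ_self, hmem⟩
    · exact ⟨n, n.lt_succ_self, hn, ha⟩

theorem InConeChain.le_or_le {P : Type*} [PartialOrder P] {Pstar : Set P} {I : ℕ → Set P}
    {k : ℕ} (hI0 : I 0 = ∅) (hIk : I (k + 1) = Pstar) {f g : P → ℝ}
    (hf : InConeChain Pstar I k f) (hg : InConeChain Pstar I k g) :
    ∀ a ∈ Pstar, ∀ b ∈ Pstar, f a ≤ f b ∨ g b ≤ g a := by
  have level : ∀ a ∈ Pstar, ∃ j ≤ k, a ∈ I (j + 1) \ I j := fun a ha => by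
    obtain ⟨j, hj, hmem⟩ := exists_lt_mem_succ_diff (s := I) (by simp [hI0]) (hIk ▸ ha)
    exact ⟨j, Nat.lt_succ_iff.1 hj, hmem⟩
  intro a ha b hb
  obtain ⟨i, hi, hai⟩ := level a ha
  obtain ⟨j, hj, hbj⟩ := level b hb
  rcases le_total i j with hij | hji
  · exact Or.inl (hf.2.2 i j hij hj a hai b hbj)
  · exact Or.inr (hg.2.2 j i hji hi b hbj a hai)

theorem compl_eq_union_of_union_eq_compl {α : Type*} {s t u : Set α} (hst : s ∪ t = uᶜ)
    (hdisj : Disjoint s t) : sᶜ = u ∪ t := by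
  ext p
  have h1 := Set.ext_iff.1 hst p
  have h2 : p ∈ s → p ∉ t := fun h => Set.disjoint_left.1 hdisj h
  simp only [Set.mem_compl_iff, Set.mem_union] at h1 ⊢
  tauto

theorem mco_cone_minkowski_general {P : Type*} [PartialOrder P] [Fintype P]
    (Pstar C O : Set P)
    (hmin : ∀ p : P, IsMin p → p ∈ Pstar)
    (hcover : C ∪ O = Pstarᶜ) (hdisj : Disjoint C O)
    (k : ℕ) (I : ℕ → Set P)
    (hI0 : I 0 = ∅) (hIk : I (k + 1) = Pstar)
    (lam mu : P → ℝ)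
    (hlam : InConeChain Pstar I k lam) (hmu : InConeChain Pstar I k mu) :
    MCO Pstar C O (lam + mu) = MCO Pstar C O lam + MCO Pstar C O mu ∧
    ((∀ a ∈ Pstar, ∃ n : ℤ, lam a = n) → (∀ a ∈ Pstar, ∃ n : ℤ, mu a = n) →
      {x ∈ MCO Pstar C O (lam + mu) | ∀ p, ∃ n : ℤ, x p = n} =
        {x ∈ MCO Pstar C O lam | ∀ p, ∃ n : ℤ, x p = n} +
          {x ∈ MCO Pstar C O mu | ∀ p, ∃ n : ℤ, x p = n}) := by
  have hC := compl_eq_union_of_union_eq_compl hcover hdisj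
  have hCne : ∀ p ∈ C, ∃ q, q ⋖ p := fun p hp => by
    obtain ⟨r, hrp⟩ := not_isMin_iff.1 fun hp' => hC.symm.subset (Or.inl (hmin p hp')) hp
    obtain ⟨q, -, hqp⟩ := exists_le_covBy_of_lt hrp
    exact ⟨q, hqp⟩
  have hco := hlam.le_or_le hI0 hIk hmu
  have hint : ∀ t : ℝ, t ∈ AddSubgroup.zmultiples (1 : ℝ) ↔ ∃ n : ℤ, t = n := fun t => by
    simp [AddSubgroup.mem_zmultiples_iff, eq_comm]
  refine ⟨by simpa using mco_add_eq ⊤ hC hCne hco (by simp) (by simp), fun hlamZ hmuZ => ?_⟩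
  simpa only [hint] using mco_add_eq _ hC hCne hco (fun a ha => (hint _).2 (hlamZ a ha))
    (fun a ha => (hint _).2 (hmuZ a ha))

/-- if two markings `λ, μ` lie in a common cone `L(P*, I)` for a chain of
order ideals `I` in `P*`, then `O_{C,O}(P,λ+μ) = O_{C,O}(P,λ) + O_{C,O}(P,μ)`, and the
same holds for lattice points when `λ` and `μ` are integral. -/
theorem mco_cone_minkowski {P : Type*} [PartialOrder P] [Fintype P]
    (Pstar C O : Set P)
    (hmin : ∀ p : P, IsMin p → p ∈ Pstar)
    (hcover : C ∪ O = Pstarᶜ) (hdisj : Disjoint C O)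
    (k : ℕ) (I : ℕ → Set P)
    (hI0 : I 0 = ∅) (hIk : I (k + 1) = Pstar)
    (hsub : ∀ j, I j ⊆ Pstar)
    (hchain : ∀ j ≤ k, I j ⊂ I (j + 1))
    (hideal : ∀ j, ∀ a ∈ Pstar, ∀ b ∈ I j, a ≤ b → a ∈ I j)
    (lam mu : P → ℝ)
    (hlam : InConeChain Pstar I k lam) (hmu : InConeChain Pstar I k mu) :
    MCO Pstar C O (lam + mu) = MCO Pstar C O lam + MCO Pstar C O mu ∧
    ((∀ a ∈ Pstar, ∃ n : ℤ, lam a = n) → (∀ a ∈ Pstar, ∃ n : ℤ, mu a = n) →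
      {x ∈ MCO Pstar C O (lam + mu) | ∀ p, ∃ n : ℤ, x p = n} =
        {x ∈ MCO Pstar C O lam | ∀ p, ∃ n : ℤ, x p = n} +
          {x ∈ MCO Pstar C O mu | ∀ p, ∃ n : ℤ, x p = n}) :=
  mco_cone_minkowski_general Pstar C O hmin hcover hdisj k I hI0 hIk lam mu hlam hmu
end

section
/- Let P be a finite ranked poset with rank function r, let P* ⊆ P contain all minimal and maximal elements, and let λ^r be the induced marking. Then the point r = (r(p))_{p ∈ P \ P*} is the unique interior lattice point of the (projected) marked order polytope O(P, λ^r) ⊆ ℝ^{P \ P*}. -/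
open scoped Classical

/-- Extend a point `x ∈ ℝ^{P̃}` on the unmarked elements by the marking `λ` on `P*`. -/
noncomputable def extFun {P : Type*} (Pstar : Set P) (lam : P → ℝ)
    (x : {p : P // p ∉ Pstar} → ℝ) : P → ℝ :=
  fun p => if h : p ∈ Pstar then lam p else x ⟨p, h⟩

/-- The projected marked order polytope `O(P,λ) ⊆ ℝ^{P̃}`: points whose extension by the
marking is order-preserving on `P`. -/
def MOproj {P : Type*} [PartialOrder P] (Pstar : Set P) (lam : P → ℝ) :
    Set ({p : P // p ∉ Pstar} → ℝ) :=
  {x | ∀ p q : P, p ≤ q → extFun Pstar lam x p ≤ extFun Pstar lam x q}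

/-- A point of `ℝ^ι` is a lattice point if all its coordinates are integers. -/
def IsLat {ι : Type*} (x : ι → ℝ) : Prop := ∀ p, ∃ n : ℤ, x p = n

private lemma rank_add_one_le {P : Type*} [PartialOrder P] [Fintype P]
    (r : P → ℤ) (hr : ∀ p q : P, p ⋖ q → r p = r q - 1) :
    ∀ p q : P, p < q → r p + 1 ≤ r q := by
  intro p
  apply (wellFounded_gt (α := P)).induction
    (C := fun p => ∀ q, p < q → r p + 1 ≤ r q) p
  intro a IH q haq
  obtain ⟨c, hc, hcq⟩ := haq.exists_covby_le
  have h1 : r a = r c - 1 := hr a c hc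
  rcases eq_or_lt_of_le hcq with rfl | hlt
  · omega
  · have h2 := IH c hc.lt q hlt
    omega

/-- for a finite ranked poset with rank function `r` and
`min(P) ∪ max(P) ⊆ P*`, the point `(r(p))_{p ∈ P̃}` is the unique interior lattice point
of the projected marked order polytope `O(P, λʳ)`. -/
theorem rank_point_unique_interior_lattice {P : Type*} [PartialOrder P] [Fintype P]
    (r : P → ℤ) (hr : ∀ p q : P, p ⋖ q → r p = r q - 1)
    (Pstar : Set P)
    (hmin : ∀ p : P, IsMin p → p ∈ Pstar)
    (hmax : ∀ p : P, IsMax p → p ∈ Pstar) :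
    {x | x ∈ interior (MOproj Pstar fun a => (r a : ℝ)) ∧ IsLat x} =
      {fun p : {p : P // p ∉ Pstar} => (r p.1 : ℝ)} := by
  have rk : ∀ p q : P, p < q → r p + 1 ≤ r q := rank_add_one_le r hr
  ext x
  simp only [Set.mem_setOf_eq, Set.mem_singleton_iff]
  constructor
  · rintro ⟨hint, hlat⟩
    obtain ⟨ε, hε, hball⟩ := Metric.mem_nhds_iff.mp (mem_interior_iff_mem_nhds.mp hint)
    set e : P → ℝ := extFun Pstar (fun a => (r a : ℝ)) x with he
    have hintZ : ∀ p : P, ∃ n : ℤ, e p = n := by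
      intro p
      by_cases h : p ∈ Pstar
      · exact ⟨r p, by simp [he, extFun, h]⟩
      · obtain ⟨n, hn⟩ := hlat ⟨p, h⟩
        exact ⟨n, by simp [he, extFun, h, hn]⟩
    -- strictness of all inequalities on the interior
    have hstrict : ∀ p q : P, p < q → e p < e q := by
      intro p q hpq
      by_cases hp : p ∈ Pstar
      · by_cases hq : q ∈ Pstar
        · have h1 := rk p q hpq
          simp only [he, extFun, dif_pos hp, dif_pos hq]
          exact_mod_cast by omega
        · -- perturb the coordinate q downwards
          set y := Function.update x ⟨q, hq⟩ (x ⟨q, hq⟩ - ε / 2) with hy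
          have hyb : y ∈ Metric.ball x ε := by
            rw [Metric.mem_ball, dist_pi_lt_iff hε]
            intro i
            by_cases hi : i = ⟨q, hq⟩
            · subst hi
              simp only [hy, Function.update_self, Real.dist_eq]
              rw [show x ⟨q, hq⟩ - ε / 2 - x ⟨q, hq⟩ = -(ε / 2) by ring, abs_neg,
                abs_of_pos (by linarith)]
              linarith
            · simp only [hy, Function.update_of_ne hi, dist_self]
              exact hε
          have h2 := hball hyb p q hpq.le
          have hyp : extFun Pstar (fun a => (r a : ℝ)) y p = e p := by
            simp [he, extFun, dif_pos hp]
          have hyq : extFun Pstar (fun a => (r a : ℝ)) y q = e q - ε / 2 := by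
            simp [he, extFun, dif_neg hq, hy]
          rw [hyp, hyq] at h2
          linarith
      · -- perturb the coordinate p upwards
        set y := Function.update x ⟨p, hp⟩ (x ⟨p, hp⟩ + ε / 2) with hy
        have hyb : y ∈ Metric.ball x ε := by
          rw [Metric.mem_ball, dist_pi_lt_iff hε]
          intro i
          by_cases hi : i = ⟨p, hp⟩
          · subst hi
            simp only [hy, Function.update_self, Real.dist_eq]
            rw [show x ⟨p, hp⟩ + ε / 2 - x ⟨p, hp⟩ = ε / 2 by ring,
              abs_of_pos (by linarith)]
            linarith
          · simp only [hy, Function.update_of_ne hi, dist_self]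
            exact hε
        have h2 := hball hyb p q hpq.le
        have hyp : extFun Pstar (fun a => (r a : ℝ)) y p = e p + ε / 2 := by
          simp [he, extFun, dif_neg hp, hy]
        have hyq : extFun Pstar (fun a => (r a : ℝ)) y q = e q := by
          by_cases hq : q ∈ Pstar
          · simp [he, extFun, dif_pos hq]
          · have hne : (⟨q, hq⟩ : {p : P // p ∉ Pstar}) ≠ ⟨p, hp⟩ := by
              simp only [ne_eq, Subtype.mk.injEq]
              exact hpq.ne'
            simp [he, extFun, dif_neg hq, hy, Function.update_of_ne hne]
        rw [hyp, hyq] at h2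
        linarith
    have hstep : ∀ p q : P, p < q → e p + 1 ≤ e q := by
      intro p q h
      obtain ⟨n, hn⟩ := hintZ p
      obtain ⟨m, hm⟩ := hintZ q
      have h1 := hstrict p q h
      rw [hn, hm] at h1 ⊢
      have h2 : n < m := by exact_mod_cast h1
      exact_mod_cast by omega
    have hub : ∀ p : P, e p ≤ (r p : ℝ) := by
      intro p
      apply (wellFounded_gt (α := P)).induction (C := fun p => e p ≤ (r p : ℝ)) p
      intro a IH
      by_cases hmx : IsMax a
      · have ha := hmax a hmx
        simp [he, extFun, ha]
      · obtain ⟨c, hc⟩ := exists_covBy_of_wellFoundedLT hmx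
        have h1 := hstep a c hc.lt
        have h2 := IH c hc.lt
        have h3 : (r a : ℝ) = (r c : ℝ) - 1 := by exact_mod_cast hr a c hc
        linarith
    have hlb : ∀ p : P, (r p : ℝ) ≤ e p := by
      intro p
      apply (wellFounded_lt (α := P)).induction (C := fun p => (r p : ℝ) ≤ e p) p
      intro a IH
      by_cases hmn : IsMin a
      · have ha := hmin a hmn
        simp [he, extFun, ha]
      · obtain ⟨c, hc⟩ := exists_covBy_of_wellFoundedGT hmn
        have h1 := hstep c a hc.lt
        have h2 := IH c hc.lt
        have h3 : (r c : ℝ) = (r a : ℝ) - 1 := by exact_mod_cast hr c a hc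
        linarith
    funext p
    have h1 : e p.1 = x p := by simp [he, extFun, p.2]
    have := le_antisymm (hub p.1) (hlb p.1)
    rw [h1] at this
    exact this.symm ▸ rfl
  · rintro rfl
    refine ⟨?_, fun p => ⟨r p.1, rfl⟩⟩
    rw [mem_interior_iff_mem_nhds, Metric.mem_nhds_iff]
    refine ⟨1 / 2, by norm_num, ?_⟩
    intro y hy p q hpq
    rcases eq_or_lt_of_le hpq with rfl | h
    · exact le_refl _
    · have hb : ∀ a : P, |extFun Pstar (fun b => (r b : ℝ)) y a - (r a : ℝ)| < 1 / 2 := by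
        intro a
        by_cases ha : a ∈ Pstar
        · simp [extFun, ha]
        · have h1 := dist_le_pi_dist y (fun p : {p : P // p ∉ Pstar} => (r p.1 : ℝ)) ⟨a, ha⟩
          rw [Real.dist_eq] at h1
          have h2 : dist y (fun p : {p : P // p ∉ Pstar} => (r p.1 : ℝ)) < 1 / 2 :=
            Metric.mem_ball.mp hy
          simp only [extFun, dif_neg ha]
          linarith
      have hbp := hb p
      have hbq := hb q
      rw [abs_lt] at hbp hbq
      have h1 : (r p : ℝ) + 1 ≤ (r q : ℝ) := by exact_mod_cast rk p q h
      linarith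
end

section
/- Let P be a finite ranked poset with rank function r, P* ⊆ P containing all minimal and maximal elements, and λ^r the induced marking. Let P̃ = P \ P* = C ⊔ O be any partition into chain and order elements. Then the point x given by x_p = r(p) for p ∈ O and x_p = 1 for p ∈ C is an interior lattice point of the marked chain-order polytope O_{C,O}(P, λ^r) ⊆ ℝ^{P̃}. -/
open scoped Classical

/-- The projected marked chain-order polytope `O_{C,O}(P,λ) ⊆ ℝ^{P̃}`. -/
def MCOproj {P : Type*} [PartialOrder P] (Pstar C O : Set P) (lam : P → ℝ) :
    Set ({p : P // p ∉ Pstar} → ℝ) :=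
  {x | extFun Pstar lam x ∈ MCO Pstar C O lam}

/-!
At the point `x`, every chain inequality `x_{p₁} + ⋯ + x_{p_k} ≤ x_b - x_a` reads
`k ≤ r(b) - r(a) = k + 1`, so it holds with slack `1`, and `x_p = 1 > 0` for `p ∈ C`.
A saturated chain has at most `|P|` elements, so perturbing every coordinate by less than
`1 / (|P| + 1)` changes each side of each inequality by less than the slack.
-/

section Chains

variable {P : Type*} [PartialOrder P]

lemma rank_eq_add_length_of_isChain {r : P → ℤ} (hr : ∀ p q : P, p ⋖ q → r p = r q - 1) :
    ∀ {l : List P} {a b : P}, List.IsChain (· ⋖ ·) (a :: (l ++ [b])) →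
      r b = r a + l.length + 1
  | [], a, b, h => by
    have := hr a b (List.isChain_pair.mp h)
    simp only [List.length_nil]
    omega
  | p :: l, a, b, h => by
    rw [List.cons_append, List.isChain_cons_cons] at h
    have hap := hr a p h.1
    have hpb := rank_eq_add_length_of_isChain hr h.2
    simp only [List.length_cons]
    omega

lemma length_add_two_le_card_of_isChain [Fintype P] {l : List P} {a b : P}
    (h : List.IsChain (· ⋖ ·) (a :: (l ++ [b]))) : l.length + 2 ≤ Fintype.card P := by
  have hlt : List.IsChain (· < ·) (a :: (l ++ [b])) := h.imp fun _ _ hc => hc.lt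
  have hnodup : (a :: (l ++ [b])).Nodup :=
    (List.isChain_iff_pairwise.mp hlt).imp ne_of_lt
  simpa [Nat.succ_le_iff] using hnodup.length_le_card

lemma sum_le_sub_of_isChain {r : P → ℤ} (hr : ∀ p q : P, p ⋖ q → r p = r q - 1)
    {f : P → ℝ} {ε : ℝ} {l : List P} {a b : P} (hchain : List.IsChain (· ⋖ ·) (a :: (l ++ [b])))
    (hε : (l.length + 2) * ε ≤ 1) (hl : ∀ p ∈ l, f p ≤ 1 + ε)
    (ha : f a ≤ r a + ε) (hb : r b - ε ≤ f b) :
    (l.map f).sum ≤ f b - f a := by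
  have hsum : (l.map f).sum ≤ l.length * (1 + ε) := by
    simpa [mul_add] using List.sum_le_card_nsmul (l.map f) (1 + ε) (by simpa using hl)
  have hrank : (r b : ℝ) = r a + l.length + 1 := by
    exact_mod_cast rank_eq_add_length_of_isChain hr hchain
  linarith

end Chains

lemma ball_subset_MCOproj {P : Type*} [PartialOrder P] [Fintype P]
    {r : P → ℤ} (hr : ∀ p q : P, p ⋖ q → r p = r q - 1) {Pstar C O : Set P}
    (hCstar : Disjoint C Pstar) (hCO : Disjoint C O) :
    Metric.ball (fun p : {p : P // p ∉ Pstar} => if p.1 ∈ C then (1 : ℝ) else (r p.1 : ℝ))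
        (1 / (Fintype.card P + 1)) ⊆ MCOproj Pstar C O fun a => (r a : ℝ) := by
  set ε : ℝ := 1 / (Fintype.card P + 1)
  have hε : 0 < ε := by positivity
  intro y hy
  have hclose := (dist_pi_lt_iff hε).mp hy
  set g := extFun Pstar (fun a => (r a : ℝ)) y
  have hgC : ∀ p ∈ C, |g p - 1| < ε := fun p hp => by
    have hps : p ∉ Pstar := hCstar.notMem_of_mem_left hp
    simpa [g, extFun, hps, hp, Real.dist_eq] using hclose ⟨p, hps⟩
  have hgO : ∀ p ∈ Pstar ∪ O, |g p - r p| < ε := fun p hp => by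
    by_cases hps : p ∈ Pstar
    · simpa [g, extFun, hps] using hε
    · have hpC : p ∉ C := hCO.notMem_of_mem_right (hp.resolve_left hps)
      simpa [g, extFun, hps, hpC, Real.dist_eq] using hclose ⟨p, hps⟩
  refine ⟨fun a ha => dif_pos ha, fun p hp => ?_, ?_⟩
  · have hε1 : ε ≤ 1 :=
      div_le_one_of_le₀ (le_add_of_nonneg_left (Nat.cast_nonneg _)) (by positivity)
    linarith [(abs_lt.mp (hgC p hp)).1]
  · rintro a b l ha hb ⟨hlC, hchain⟩
    have hlen : ((l.length : ℝ) + 2) ≤ Fintype.card P := by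
      exact_mod_cast length_add_two_le_card_of_isChain hchain
    have hlε : (l.length + 2) * ε ≤ 1 := by
      rw [← div_eq_mul_one_div, div_le_one (by positivity)]
      linarith
    exact sum_le_sub_of_isChain hr hchain hlε
      (fun p hp => by linarith [abs_lt.mp (hgC p (hlC p hp))])
      (by linarith [abs_lt.mp (hgO a ha)]) (by linarith [abs_lt.mp (hgO b hb)])

theorem interior_lattice_point_mco_general {P : Type*} [PartialOrder P] [Fintype P]
    (r : P → ℤ) (hr : ∀ p q : P, p ⋖ q → r p = r q - 1)
    (Pstar C O : Set P)
    (hcover : C ∪ O = Pstarᶜ) (hdisj : Disjoint C O) :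
    (fun p : {p : P // p ∉ Pstar} => if p.1 ∈ C then (1 : ℝ) else (r p.1 : ℝ)) ∈
        interior (MCOproj Pstar C O fun a => (r a : ℝ)) ∧
      IsLat (fun p : {p : P // p ∉ Pstar} =>
        if p.1 ∈ C then (1 : ℝ) else (r p.1 : ℝ)) := by
  have hCstar : Disjoint C Pstar :=
    Set.subset_compl_iff_disjoint_right.mp (Set.subset_union_left.trans hcover.subset)
  refine ⟨mem_interior.mpr ⟨_, ball_subset_MCOproj hr hCstar hdisj, Metric.isOpen_ball,
    Metric.mem_ball_self (by positivity)⟩, fun p => ?_⟩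
  by_cases hp : p.1 ∈ C
  · exact ⟨1, by simp [hp]⟩
  · exact ⟨r p.1, by simp [hp]⟩

/-- for a finite ranked poset with rank function `r`, marked elements
`P* ⊇ min(P) ∪ max(P)` and any partition `P̃ = C ⊔ O`, the point with coordinates `r(p)`
for `p ∈ O` and `1` for `p ∈ C` is an interior lattice point of `O_{C,O}(P, λʳ)`. -/
theorem interior_lattice_point_mco {P : Type*} [PartialOrder P] [Fintype P]
    (r : P → ℤ) (hr : ∀ p q : P, p ⋖ q → r p = r q - 1)
    (Pstar C O : Set P)
    (hmin : ∀ p : P, IsMin p → p ∈ Pstar)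
    (hmax : ∀ p : P, IsMax p → p ∈ Pstar)
    (hcover : C ∪ O = Pstarᶜ) (hdisj : Disjoint C O) :
    (fun p : {p : P // p ∉ Pstar} => if p.1 ∈ C then (1 : ℝ) else (r p.1 : ℝ)) ∈
        interior (MCOproj Pstar C O fun a => (r a : ℝ)) ∧
      IsLat (fun p : {p : P // p ∉ Pstar} =>
        if p.1 ∈ C then (1 : ℝ) else (r p.1 : ℝ)) :=
  interior_lattice_point_mco_general r hr Pstar C O hcover hdisj
end

section
/- Let P be a finite ranked poset with rank function r, P* ⊇ min(P) ∪ max(P), and λ^r the induced marking. For any partition P̃ = C ⊔ O, consider the translate Q of the marked chain-order polytope O_{C,O}(P,λ^r) ⊆ ℝ^{P̃} by the negative of its interior lattice point (x_p = r(p) for p ∈ O, x_p = 1 for p ∈ C). Then every facet-defining inequality of Q has the form α(x) ≤ 1 with α an integral linear functional; consequently the polar dual Q° is a lattice polytope, i.e., Q is reflexive. -/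
/-! Write `z` for the interior lattice point and substitute `x = y + z`. The inequality
`x_p ≥ 0` (`p ∈ C`) becomes `-y_p ≤ 1`, and since `r(b) - r(a) = k + 1` along a saturated chain
`a ≺ p₁ ≺ ⋯ ≺ p_k ≺ b`, its chain inequality becomes `y_{p₁} + ⋯ + y_{p_k} + y_a - y_b ≤ 1`
(with `y = 0` on `P*`). The elements of a saturated chain are distinct, so all these normals have
entries in `{-1, 0, 1}`: there are finitely many and they are lattice points. Finally, for any
finite set `A` of normals, `0` satisfies every `α(y) ≤ 1` strictly, and by separation the polar
of `{y | α(y) ≤ 1 for α ∈ A}` is `conv (A ∪ {0})`. -/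

open scoped Classical

/-- The polar dual of `Q ⊆ ℝ^ι`, with functionals identified with vectors via the
standard pairing. -/
def polarDual {ι : Type*} [Fintype ι] (Q : Set (ι → ℝ)) : Set (ι → ℝ) :=
  {a | ∀ x ∈ Q, ∑ p, a p * x p ≤ 1}

section Polar

variable {ι : Type*} [Fintype ι]

theorem convex_polarDual (Q : Set (ι → ℝ)) : Convex ℝ (polarDual Q) := by
  intro a ha b hb s t hs ht hst x hx
  have hab : (s • a + t • b) ⬝ᵥ x = s * (a ⬝ᵥ x) + t * (b ⬝ᵥ x) := by
    rw [add_dotProduct, smul_dotProduct, smul_dotProduct, smul_eq_mul, smul_eq_mul]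
  have hax : a ⬝ᵥ x ≤ 1 := ha x hx
  have hbx : b ⬝ᵥ x ≤ 1 := hb x hx
  change (s • a + t • b) ⬝ᵥ x ≤ 1
  rw [hab]
  nlinarith

theorem zero_mem_interior_setOf_dotProduct_le_one (A : Finset (ι → ℝ)) :
    (0 : ι → ℝ) ∈ interior {x | ∀ α ∈ A, α ⬝ᵥ x ≤ 1} := by
  have hopen : IsOpen {x : ι → ℝ | ∀ α ∈ A, α ⬝ᵥ x < 1} := by
    simp only [Set.ofPred_forall]
    exact isOpen_biInter_finset fun α _ =>
      isOpen_lt (continuous_const.dotProduct continuous_id) continuous_const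
  refine interior_maximal (fun x hx α hα => (hx α hα).le) hopen ?_
  simp

theorem polarDual_setOf_dotProduct_le_one (A : Finset (ι → ℝ)) :
    polarDual {x | ∀ α ∈ A, α ⬝ᵥ x ≤ 1} = convexHull ℝ ↑(insert 0 A) := by
  refine subset_antisymm (fun β hβ => ?_) (convexHull_min ?_ (convex_polarDual _))
  · by_contra hβK
    obtain ⟨f, u, hfK, hfβ⟩ := geometric_hahn_banach_closed_point (convex_convexHull ℝ _)
      ((insert 0 A).finite_toSet.isCompact_convexHull ℝ).isClosed hβK
    have hu : 0 < u := by
      simpa using hfK 0 (subset_convexHull ℝ _ (by simp))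
    set g : ι → ℝ := fun i => f fun j => if i = j then 1 else 0
    have hfg : ∀ w, f w = w ⬝ᵥ g := fun w =>
      (f : (ι → ℝ) →ₗ[ℝ] ℝ).pi_apply_eq_sum_univ w
    -- `u⁻¹ • g` lies in the polyhedron but `β` takes a value `> 1` on it.
    have hmem : u⁻¹ • g ∈ {x | ∀ α ∈ A, α ⬝ᵥ x ≤ 1} := by
      intro α hα
      have := hfK α (subset_convexHull ℝ _ (by simp [hα]))
      rw [dotProduct_smul, smul_eq_mul, ← hfg, inv_mul_le_one₀ hu]
      exact this.le
    have := hβ _ hmem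
    change β ⬝ᵥ (u⁻¹ • g) ≤ 1 at this
    rw [dotProduct_smul, smul_eq_mul, ← hfg, inv_mul_le_one₀ hu] at this
    linarith
  · intro α hα x hx
    change α ⬝ᵥ x ≤ 1
    rcases Finset.mem_insert.1 hα with rfl | hα
    · simp
    · exact hx α hα

end Polar

section Chains

variable {P : Type*}

lemma rank_eq_of_isChain_covBy [LT P] {r : P → ℤ} (hr : ∀ p q : P, p ⋖ q → r p = r q - 1) :
    ∀ {a b : P} {l : List P}, (a :: (l ++ [b])).IsChain (· ⋖ ·) → r b = r a + l.length + 1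
  | a, b, [], h => by
    have := hr a b (List.isChain_pair.1 h)
    simp only [List.length_nil]
    omega
  | a, b, p :: l, h => by
    rw [List.cons_append, List.isChain_cons_cons] at h
    have := hr a p h.1
    have := rank_eq_of_isChain_covBy hr h.2
    simp only [List.length_cons]
    push_cast
    omega

lemma nodup_of_isChain_covBy [Preorder P] {l : List P} (h : l.IsChain (· ⋖ ·)) : l.Nodup :=
  (h.imp fun _ _ => CovBy.lt).pairwise.nodup

end Chains

section ChainFunctionals

variable {P : Type*} (Pstar : Set P)

lemma extFun_add (lam : P → ℝ) (x y : {p : P // p ∉ Pstar} → ℝ) :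
    extFun Pstar lam (x + y) = extFun Pstar 0 x + extFun Pstar lam y := by
  funext p
  simp only [extFun, Pi.add_apply]
  split_ifs <;> simp

lemma extFun_comp_val {lam u : P → ℝ} (h : ∀ a ∈ Pstar, lam a = u a) :
    extFun Pstar lam (fun q => u q.1) = u := by
  funext p
  unfold extFun
  split_ifs with hp
  exacts [h p hp, rfl]

noncomputable def indicatorVec (c : P) : {p : P // p ∉ Pstar} → ℝ :=
  fun q => if q.1 = c then 1 else 0

noncomputable def countVec (l : List P) : {p : P // p ∉ Pstar} → ℝ :=
  fun q => l.count q.1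

/-- The functional `x ↦ x_{p₁} + ⋯ + x_{pᵣ} + x_a - x_b` of the chain `a ≺ p₁ ≺ ⋯ ≺ pᵣ ≺ b`;
coordinates in `P*` are dropped. -/
noncomputable def chainVec (a b : P) (l : List P) : {p : P // p ∉ Pstar} → ℝ :=
  countVec Pstar l + indicatorVec Pstar a - indicatorVec Pstar b

lemma countVec_cons (p : P) (l : List P) :
    countVec Pstar (p :: l) = countVec Pstar l + indicatorVec Pstar p := by
  funext q
  rcases eq_or_ne p q.1 with h | h
  · simp [countVec, indicatorVec, h]
  · simp [countVec, indicatorVec, h, h.symm]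

lemma chainVec_apply_mem {a b : P} {l : List P} (h : (a :: (l ++ [b])).Nodup)
    (q : {p : P // p ∉ Pstar}) : chainVec Pstar a b l q ∈ ({-1, 0, 1} : Set ℝ) := by
  have hcount := List.nodup_iff_count_le_one.1 h q.1
  simp only [List.count_cons, List.count_append, beq_iff_eq,
    @eq_comm _ a, @eq_comm _ b] at hcount
  simp only [chainVec, countVec, indicatorVec, Pi.add_apply, Pi.sub_apply]
  generalize List.count q.1 l = n at hcount ⊢
  split_ifs at hcount ⊢ <;> rcases (by omega : n = 0 ∨ n = 1) with rfl | rfl <;>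
    simp_all

variable [Fintype {p : P // p ∉ Pstar}]

lemma indicatorVec_dotProduct (c : P) (w : {p : P // p ∉ Pstar} → ℝ) :
    indicatorVec Pstar c ⬝ᵥ w = extFun Pstar 0 w c := by
  by_cases hc : c ∈ Pstar
  · have : indicatorVec Pstar c = 0 := funext fun q => if_neg fun h : q.1 = c => q.2 (h ▸ hc)
    simp [this, extFun, hc]
  · have : indicatorVec Pstar c = Pi.single ⟨c, hc⟩ 1 := by
      funext q
      simp [indicatorVec, Pi.single_apply, Subtype.ext_iff]
    simp [this, extFun, hc]

lemma countVec_dotProduct (l : List P) (w : {p : P // p ∉ Pstar} → ℝ) :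
    countVec Pstar l ⬝ᵥ w = (l.map (extFun Pstar 0 w)).sum := by
  induction l with
  | nil => simp [countVec, dotProduct]
  | cons p l ih =>
    rw [countVec_cons, add_dotProduct, ih, indicatorVec_dotProduct, List.map_cons,
      List.sum_cons, add_comm]

lemma chainVec_dotProduct (a b : P) (l : List P) (w : {p : P // p ∉ Pstar} → ℝ) :
    chainVec Pstar a b l ⬝ᵥ w =
      (l.map (extFun Pstar 0 w)).sum + extFun Pstar 0 w a - extFun Pstar 0 w b := by
  rw [chainVec, sub_dotProduct, add_dotProduct, countVec_dotProduct, indicatorVec_dotProduct,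
    indicatorVec_dotProduct]

end ChainFunctionals

section MarkedChainOrder

variable {P : Type*} [PartialOrder P] (Pstar C O : Set P)

/-- The normals `α` of the inequalities `α(x) ≤ 1` cutting out the translated polytope:
`-e_p` for `p ∈ C`, and the chain functionals. -/
noncomputable def mcoNormals : Set ({p : P // p ∉ Pstar} → ℝ) :=
  (fun p => -indicatorVec Pstar p) '' C ∪
    {α | ∃ a ∈ Pstar ∪ O, ∃ b ∈ Pstar ∪ O, ∃ l, SatChain C a b l ∧ chainVec Pstar a b l = α}

lemma mcoNormals_subset_pi :
    mcoNormals Pstar C O ⊆ Set.univ.pi fun _ => ({-1, 0, 1} : Set ℝ) := by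
  rintro α (⟨p, -, rfl⟩ | ⟨a, -, b, -, l, hl, rfl⟩) q -
  · by_cases h : q.1 = p <;> simp [indicatorVec, h]
  · exact chainVec_apply_mem Pstar (nodup_of_isChain_covBy hl.2) q

variable {Pstar C O} [Fintype {p : P // p ∉ Pstar}]

theorem add_mem_MCOproj_iff {r : P → ℤ} (hr : ∀ p q : P, p ⋖ q → r p = r q - 1)
    (hCP : Disjoint C Pstar) (hCO : Disjoint C O) (y : {p : P // p ∉ Pstar} → ℝ) :
    y + (fun q => if q.1 ∈ C then (1 : ℝ) else r q.1) ∈ MCOproj Pstar C O (fun a => (r a : ℝ)) ↔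
      ∀ α ∈ mcoNormals Pstar C O, α ⬝ᵥ y ≤ 1 := by
  set u : P → ℝ := fun p => if p ∈ C then 1 else r p
  set Y := extFun Pstar 0 y with hY
  have hext : extFun Pstar (fun a => (r a : ℝ)) (y + fun q => u q.1) = Y + u := by
    rw [extFun_add, extFun_comp_val]
    intro a ha
    simp [u, hCP.notMem_of_mem_right ha]
  have hmark : ∀ a ∈ Pstar, (Y + u) a = r a := by
    intro a ha
    simp [Y, u, extFun, ha, hCP.notMem_of_mem_right ha]
  have hcoord : ∀ p ∈ C, 0 ≤ (Y + u) p ↔ -indicatorVec Pstar p ⬝ᵥ y ≤ 1 := by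
    intro p hp
    have hup : u p = 1 := if_pos hp
    rw [neg_dotProduct, indicatorVec_dotProduct, ← hY, Pi.add_apply, hup]
    constructor <;> intro <;> linarith
  have hchain : ∀ a ∈ Pstar ∪ O, ∀ b ∈ Pstar ∪ O, ∀ l, SatChain C a b l →
      ((l.map (Y + u)).sum ≤ (Y + u) b - (Y + u) a ↔ chainVec Pstar a b l ⬝ᵥ y ≤ 1) := by
    intro a ha b hb l hl
    have hu_end : ∀ c ∈ Pstar ∪ O, u c = r c := fun c hc =>
      if_neg fun hcC => hc.elim (hCP.notMem_of_mem_left hcC) (hCO.notMem_of_mem_left hcC)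
    have hu_l : (l.map u).sum = l.length := by
      rw [List.map_congr_left fun p hp => if_pos (hl.1 p hp)]
      simp
    have hrk := rank_eq_of_isChain_covBy hr hl.2
    have hsum : (l.map (Y + u)).sum = (l.map Y).sum + l.length := by
      rw [← hu_l]
      exact List.sum_map_add
    rw [chainVec_dotProduct, ← hY, hsum, Pi.add_apply, Pi.add_apply, hu_end a ha, hu_end b hb,
      hrk]
    push_cast
    constructor <;> intro <;> linarith
  change extFun Pstar _ (y + fun q => u q.1) ∈ MCO Pstar C O _ ↔ _
  rw [hext]
  constructor
  · rintro ⟨-, hC, hch⟩ α (⟨p, hp, rfl⟩ | ⟨a, ha, b, hb, l, hl, rfl⟩)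
    exacts [(hcoord p hp).1 (hC p hp), (hchain a ha b hb l hl).1 (hch a b l ha hb hl)]
  · intro h
    exact ⟨hmark, fun p hp => (hcoord p hp).2 (h _ (Or.inl ⟨p, hp, rfl⟩)),
      fun a b l ha hb hl => (hchain a ha b hb l hl).2 (h _ (Or.inr ⟨a, ha, b, hb, l, hl, rfl⟩))⟩

end MarkedChainOrder

theorem mco_rank_reflexive_general {P : Type*} [PartialOrder P]
    (r : P → ℤ) (hr : ∀ p q : P, p ⋖ q → r p = r q - 1)
    (Pstar C O : Set P) [Fintype {p : P // p ∉ Pstar}]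
    (hcover : C ∪ O = Pstarᶜ) (hdisj : Disjoint C O) :
    ∀ Q : Set ({p : P // p ∉ Pstar} → ℝ),
      Q = (fun x => x - fun p : {p : P // p ∉ Pstar} =>
            if p.1 ∈ C then (1 : ℝ) else (r p.1 : ℝ)) ''
          MCOproj Pstar C O (fun a => (r a : ℝ)) →
      (0 : {p : P // p ∉ Pstar} → ℝ) ∈ interior Q ∧
      ∃ A : Finset ({p : P // p ∉ Pstar} → ℝ), (∀ α ∈ A, IsLat α) ∧
        polarDual Q = convexHull ℝ (A : Set ({p : P // p ∉ Pstar} → ℝ)) := by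
  intro Q hQ
  have hCP : Disjoint C Pstar :=
    Set.subset_compl_iff_disjoint_right.1 (hcover ▸ Set.subset_union_left)
  have hfin : (mcoNormals Pstar C O).Finite :=
    (Set.Finite.pi fun _ => Set.toFinite _).subset (mcoNormals_subset_pi Pstar C O)
  set A := hfin.toFinset
  have hQA : Q = {y | ∀ α ∈ A, α ⬝ᵥ y ≤ 1} := by
    ext y
    simp [hQ, sub_eq_iff_eq_add, A, ← add_mem_MCOproj_iff hr hCP hdisj y]
  refine ⟨hQA ▸ zero_mem_interior_setOf_dotProduct_le_one A, insert 0 A, ?_,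
    hQA ▸ polarDual_setOf_dotProduct_le_one A⟩
  intro α hα p
  rcases Finset.mem_insert.1 hα with rfl | hα
  · exact ⟨0, by simp⟩
  · obtain h | h | h : α p = -1 ∨ α p = 0 ∨ α p = 1 :=
      mcoNormals_subset_pi Pstar C O (hfin.mem_toFinset.1 hα) p trivial
    exacts [⟨-1, by simp [h]⟩, ⟨0, by simp [h]⟩, ⟨1, by simp [h]⟩]

/-- for a finite ranked poset with rank function `r`,
`P* ⊇ min(P) ∪ max(P)` and any partition `P̃ = C ⊔ O`, the translate `Q` of
`O_{C,O}(P,λʳ)` by the negative of its interior lattice point has `0` in its interior and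
its polar dual is a lattice polytope (the convex hull of finitely many lattice points),
i.e., `Q` is reflexive. -/
theorem mco_rank_reflexive {P : Type*} [PartialOrder P] [Fintype P]
    (r : P → ℤ) (hr : ∀ p q : P, p ⋖ q → r p = r q - 1)
    (Pstar C O : Set P) [Fintype {p : P // p ∉ Pstar}]
    (hmin : ∀ p : P, IsMin p → p ∈ Pstar)
    (hmax : ∀ p : P, IsMax p → p ∈ Pstar)
    (hcover : C ∪ O = Pstarᶜ) (hdisj : Disjoint C O) :
    ∀ Q : Set ({p : P // p ∉ Pstar} → ℝ),
      Q = (fun x => x - fun p : {p : P // p ∉ Pstar} =>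
            if p.1 ∈ C then (1 : ℝ) else (r p.1 : ℝ)) ''
          MCOproj Pstar C O (fun a => (r a : ℝ)) →
      (0 : {p : P // p ∉ Pstar} → ℝ) ∈ interior Q ∧
      ∃ A : Finset ({p : P // p ∉ Pstar} → ℝ), (∀ α ∈ A, IsLat α) ∧
        polarDual Q = convexHull ℝ (A : Set ({p : P // p ∉ Pstar} → ℝ)) :=
  mco_rank_reflexive_general r hr Pstar C O hcover hdisj
end

section
/- Let P be a finite poset, P* ⊆ P with min(P) ∪ max(P) ⊆ P*, and λ: P* → ℤ an integral order-preserving marking such that (P,λ) is regular. Suppose P is ranked but λ does not arise from any rank function, i.e., there exist a < b in P* such that λ(b) − λ(a) is strictly greater than the length of every saturated chain from a to b. If the marked order polytope O(P,λ) has a unique interior lattice point u, then the translated polytope O(P,λ) − u is not reflexive. -/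
/-!
Write `v` for the extension of `u` by `λ`. Since `u` is interior, `v` is strictly increasing on
`P`, and since `λ(b) - λ(a)` exceeds the length of a saturated chain from `a` to `b`, some cover
`p ⋖ q` has `d = v(q) - v(p) > 1`. Regularity makes `x_p ≤ x_q` a facet of `O(P, λ)`: gluing `p`
to `q` leaves a poset on which `λ` still extends strictly monotonically, and such an extension is
a point of this facet lying on no other facet. Hence `α = (e_p - e_q) / d`, the normal of the facet
scaled so that `⟨α, x - u⟩ ≤ 1` on `O(P, λ)`, is a vertex of the polar dual of `O(P, λ) - u`.
One of `p`, `q` is unmarked, so `α` has a coordinate `±1/d ∉ ℤ`.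
-/

open scoped Classical

open Filter Topology Relation

theorem Submodule.span_eq_top_of_add_smul_mem {K E : Type*} [Field K] [AddCommGroup E]
    [Module K E] {F : Set E} (f : Module.Dual K E) {y₀ : E} (hy₀ : y₀ ∈ F) (hfy₀ : f y₀ ≠ 0)
    (hF : ∀ w, f w = 0 → ∃ t ≠ (0 : K), y₀ + t • w ∈ F) : span K F = ⊤ := by
  refine eq_top_iff'.2 fun z => ?_
  have hy₀' := subset_span (R := K) hy₀
  set c := f z / f y₀
  obtain ⟨t, ht, hmem⟩ := hF (z - c • y₀) (by simp [c, hfy₀])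
  have hw : z - c • y₀ ∈ span K F := by
    have := smul_mem _ t⁻¹ (sub_mem (subset_span hmem) hy₀')
    rwa [add_sub_cancel_left, inv_smul_smul₀ ht] at this
  simpa using add_mem hw (smul_mem _ c hy₀')

theorem mem_extremePoints_polarDual_of_span_eq_top {ι : Type*} [Fintype ι] {Q : Set (ι → ℝ)}
    {α : ι → ℝ} (hα : α ∈ polarDual Q) (hspan : Submodule.span ℝ {y ∈ Q | α ⬝ᵥ y = 1} = ⊤) :
    α ∈ (polarDual Q).extremePoints ℝ := by
  refine mem_extremePoints_iff_left.2 ⟨hα, fun β hβ γ hγ ⟨s, t, hs, ht, hst, hαst⟩ => ?_⟩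
  have hface : {y ∈ Q | α ⬝ᵥ y = 1} ⊆ LinearMap.ker (dotProductEquiv ℝ ι (β - α)) := by
    rintro y ⟨hyQ, hy⟩
    have hβy : β ⬝ᵥ y ≤ 1 := hβ y hyQ
    have hγy : γ ⬝ᵥ y ≤ 1 := hγ y hyQ
    have hsum : s * (β ⬝ᵥ y) + t * (γ ⬝ᵥ y) = 1 := by
      rw [← hy, ← hαst, add_dotProduct, smul_dotProduct, smul_dotProduct, smul_eq_mul,
        smul_eq_mul]
    have : β ⬝ᵥ y = 1 := by nlinarith
    simp [this, hy]
  have hker := hspan ▸ Submodule.span_le.2 hface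
  have : (β - α) ⬝ᵥ (β - α) = 0 := hker Submodule.mem_top
  exact sub_eq_zero.1 (dotProduct_self_eq_zero.1 this)

theorem exists_pos_add_smul_mem_of_mem_interior {E : Type*} [TopologicalSpace E]
    [AddCommGroup E] [Module ℝ E] [ContinuousAdd E] [ContinuousSMul ℝ E] {s : Set E} {x : E}
    (hx : x ∈ interior s) (v : E) : ∃ t : ℝ, 0 < t ∧ x + t • v ∈ s := by
  have hcont : Tendsto (fun t : ℝ => x + t • v) (𝓝 0) (𝓝 x) := by
    simpa using ((continuous_id.smul continuous_const).const_add x).tendsto (0 : ℝ)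
  exact (hcont.eventually (mem_interior_iff_mem_nhds.1 hx)).exists_gt

theorem exists_pos_monotone_add_smul {α : Type*} [PartialOrder α] [LocallyFiniteOrder α]
    [Finite α] {φ η : α → ℝ} (h : ∀ r s, r ⋖ s → φ r < φ s ∨ (φ r = φ s ∧ η r = η s)) :
    ∃ t : ℝ, 0 < t ∧ Monotone (φ + t • η) := by
  have hev : ∀ᶠ t in 𝓝 (0 : ℝ), ∀ r s, r ⋖ s → φ r + t * η r ≤ φ s + t * η s := by
    have hcont : ∀ w, Tendsto (fun t : ℝ => φ w + t * η w) (𝓝 0) (𝓝 (φ w)) := fun w => by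
      simpa using ((continuous_mul_const (η w)).const_add (φ w)).tendsto 0
    simp only [eventually_all]
    intro r s hrs
    rcases h r s hrs with hlt | ⟨hφ, hη⟩
    · exact ((hcont r).eventually_lt (hcont s) hlt).mono fun _ => le_of_lt
    · exact .of_forall fun t => by rw [hφ, hη]
  obtain ⟨t, ht0, ht⟩ := hev.exists_gt
  exact ⟨t, ht0, (monotone_iff_forall_covBy _).2 fun r s hrs => by simpa using ht r s hrs⟩

theorem Relation.TransGen.exists_one_lt_sub {α : Type*} {R : α → α → Prop} {f : α → ℝ}
    {a b : α} (h : TransGen R a b)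
    (hlong : ∀ l : List α, List.IsChain R (a :: (l ++ [b])) → (l.length : ℝ) + 1 < f b - f a) :
    ∃ x y, R x y ∧ 1 < f y - f x := by
  by_contra! hstep
  have hchain : ∀ {x}, TransGen R x b →
      ∃ l : List α, List.IsChain R (x :: (l ++ [b])) ∧ f b - f x ≤ l.length + 1 := by
    intro x hx
    induction hx using Relation.TransGen.head_induction_on with
    | single hxb => exact ⟨[], List.isChain_pair.2 hxb, by simpa using hstep _ _ hxb⟩
    | head hxc _ ih =>
      obtain ⟨l, hl, hle⟩ := ih
      refine ⟨_ :: l, List.isChain_cons_cons.2 ⟨hxc, hl⟩, ?_⟩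
      have := hstep _ _ hxc
      simp only [List.length_cons, Nat.cast_add, Nat.cast_one]
      linarith
  obtain ⟨l, hl, hle⟩ := hchain h
  exact (hle.trans_lt (hlong l hl)).false

theorem exists_strict_extension {α : Type*} [Fintype α] (R : α → α → Prop)
    (hrefl : ∀ x, R x x) (htrans : ∀ x y z, R x y → R y z → R x z) (S : Set α) (f : α → ℝ)
    (hbelow : ∀ x, ∃ a ∈ S, R a x) (hf : ∀ a ∈ S, ∀ b ∈ S, R a b → a ≠ b → f a < f b) :
    ∃ g : α → ℝ, (∀ a ∈ S, g a = f a) ∧ ∀ x y, R x y → g x ≤ g y ∧ (¬ R y x → g x < g y) := by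
  let h : α → ℝ := fun x => (Finset.univ.filter (R · x)).card
  have hmono : ∀ x y, R x y → h x ≤ h y ∧ (¬ R y x → h x < h y) := by
    intro x y hxy
    have hsub : Finset.univ.filter (R · x) ⊆ Finset.univ.filter (R · y) := by
      intro z; simpa using fun hzx => htrans z x y hzx hxy
    simp only [h]
    refine ⟨by exact_mod_cast Finset.card_le_card hsub, fun hyx => ?_⟩
    have : Finset.univ.filter (R · x) ⊂ Finset.univ.filter (R · y) :=
      Finset.ssubset_iff_of_subset hsub |>.2 ⟨y, by simpa using hrefl y, by simpa using hyx⟩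
    exact_mod_cast Finset.card_lt_card this
  have hbound : ∀ x, 0 ≤ h x ∧ h x ≤ Fintype.card α := fun x => by
    simp only [h]
    exact ⟨by positivity, by exact_mod_cast Finset.card_le_univ _⟩
  obtain ⟨ε, hε, hεf⟩ : ∃ ε : ℝ, 0 < ε ∧
      ∀ a b, a ∈ S ∧ b ∈ S ∧ R a b ∧ a ≠ b → ε * Fintype.card α < f b - f a := by
    refine Eventually.exists_gt ?_
    simp only [eventually_all]
    rintro a b ⟨ha, hb, hab, hne⟩
    have : Tendsto (fun ε : ℝ => ε * Fintype.card α) (𝓝 0) (𝓝 0) := by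
      simpa using (continuous_mul_const _).tendsto (0 : ℝ)
    exact this.eventually_lt_const (sub_pos.2 (hf a ha b hb hab hne))
  -- `g x = max {f a + ε (h x - h a) | a ∈ S, R a x}`; `ε` is small enough that the correction
  -- term never outweighs a difference of values of `f` on `S`.
  let below : α → Finset α := fun x => Finset.univ.filter (fun a => a ∈ S ∧ R a x)
  have hne : ∀ x, (below x).Nonempty := fun x => by
    obtain ⟨a, ha, hax⟩ := hbelow x
    exact ⟨a, by simp [below, ha, hax]⟩
  let g : α → ℝ := fun x => (below x).sup' (hne x) fun a => f a + ε * (h x - h a)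
  have hg : ∀ x y, R x y → g x + ε * (h y - h x) ≤ g y := by
    intro x y hxy
    rw [← le_sub_iff_add_le, Finset.sup'_le_iff]
    intro a ha
    have hay : a ∈ below y := by
      simp only [below, Finset.mem_filter, Finset.mem_univ, true_and] at ha ⊢
      exact ⟨ha.1, htrans a x y ha.2 hxy⟩
    have := Finset.le_sup' (fun a => f a + ε * (h y - h a)) hay
    linarith
  refine ⟨g, fun a ha => le_antisymm ?_ ?_, fun x y hxy => ?_⟩
  · refine Finset.sup'_le _ _ fun b hb => ?_
    simp only [below, Finset.mem_filter, Finset.mem_univ, true_and] at hb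
    rcases eq_or_ne b a with rfl | hba
    · simp
    · have := hεf b a ⟨hb.1, ha, hb.2, hba⟩
      nlinarith [hbound a, hbound b]
  · simpa using Finset.le_sup' (fun b => f b + ε * (h a - h b))
      (Finset.mem_filter.2 ⟨Finset.mem_univ a, ha, hrefl a⟩ : a ∈ below a)
  · obtain ⟨hle, hlt⟩ := hmono x y hxy
    have := hg x y hxy
    exact ⟨by nlinarith, fun hyx => by nlinarith [hlt hyx]⟩

theorem inv_ne_intCast {d : ℝ} (hd : 1 < d) (n : ℤ) : d⁻¹ ≠ n := by
  intro h
  have h₀ : (0 : ℝ) < n := h ▸ inv_pos.2 (zero_lt_one.trans hd)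
  have h₁ : (n : ℝ) < 1 := h ▸ inv_lt_one_of_one_lt₀ hd
  norm_cast at h₀ h₁
  omega

section MarkedOrderPolytope

variable {P : Type*} {S : Set P}

theorem extFun_of_mem {lam : P → ℝ} (x : {p : P // p ∉ S} → ℝ) {a : P} (ha : a ∈ S) :
    extFun S lam x a = lam a := by
  simp [extFun, ha]

theorem extFun_add_smul (lam : P → ℝ) (x y : {p : P // p ∉ S} → ℝ) (t : ℝ) :
    extFun S lam (x + t • y) = extFun S lam x + t • extFun S 0 y := by
  ext p
  by_cases hp : p ∈ S <;> simp [extFun, hp]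

theorem extFun_sub (lam : P → ℝ) (x y : {p : P // p ∉ S} → ℝ) :
    extFun S 0 (x - y) = extFun S lam x - extFun S lam y := by
  ext p
  by_cases hp : p ∈ S <;> simp [extFun, hp]

theorem extFun_restrict {lam φ : P → ℝ} (hφ : ∀ a ∈ S, φ a = lam a) :
    extFun S lam (fun r : {p : P // p ∉ S} => φ r) = φ := by
  ext p
  by_cases hp : p ∈ S <;> simp [extFun, hp, hφ]

theorem mem_MOproj_iff [PartialOrder P] {lam : P → ℝ} {x : {p : P // p ∉ S} → ℝ} :
    x ∈ MOproj S lam ↔ Monotone (extFun S lam x) :=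
  Iff.rfl

/-- The coordinate vector of `w` in `ℝ^{P̃}`; it is zero when `w` is marked. -/
noncomputable def freeIndicator (S : Set P) (w : P) : {p : P // p ∉ S} → ℝ :=
  fun r => if r.1 = w then 1 else 0

theorem freeIndicator_dotProduct [Fintype {p : P // p ∉ S}] (w : P)
    (z : {p : P // p ∉ S} → ℝ) : freeIndicator S w ⬝ᵥ z = extFun S 0 z w := by
  by_cases hw : w ∈ S
  · simp only [extFun, hw, dite_true, Pi.zero_apply]
    refine Finset.sum_eq_zero fun r _ => ?_
    simp [freeIndicator, show r.1 ≠ w from fun h => r.2 (h ▸ hw)]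
  · rw [dotProduct, Finset.sum_eq_single ⟨w, hw⟩]
    · simp [freeIndicator, extFun, hw]
    · intro r _ hr
      simp [freeIndicator, show r.1 ≠ w from fun h => hr (Subtype.ext h)]
    · simp

variable [PartialOrder P]

def IsRegularMarking (S : Set P) (lam : P → ℝ) : Prop :=
  ∀ p q : P, p ⋖ q → ∀ a ∈ S, ∀ b ∈ S, a ≤ q → p ≤ b → a = b ∨ lam a < lam b

namespace IsRegularMarking

variable {lam : P → ℝ}

theorem lt_of_lt [LocallyFiniteOrder P] (hreg : IsRegularMarking S lam) {a b : P} (ha : a ∈ S)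
    (hb : b ∈ S) (hab : a < b) : lam a < lam b := by
  obtain ⟨p, -, hpb⟩ := TransGen.tail'_iff.1 (transGen_covBy_of_lt hab)
  exact (hreg p b hpb a ha b hb hab.le hpb.le).resolve_left hab.ne

theorem not_mem_or_not_mem_of_covBy (hreg : IsRegularMarking S lam) {p q : P} (hpq : p ⋖ q) :
    p ∉ S ∨ q ∉ S := by
  by_contra! h
  have h₁ := (hreg p q hpq p h.1 q h.2 hpq.le hpq.le).resolve_left hpq.ne
  have h₂ := (hreg p q hpq q h.2 p h.1 le_rfl le_rfl).resolve_left hpq.ne'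
  exact h₁.asymm h₂

/-- A point of the face `x_{p₀} = x_{q₀}` of `O(P, λ)` lying on no other facet. -/
theorem exists_facet_point [Fintype P] [LocallyFiniteOrder P] (hreg : IsRegularMarking S lam)
    (hmin : ∀ p : P, IsMin p → p ∈ S) {p₀ q₀ : P} (hcov : p₀ ⋖ q₀) :
    ∃ φ : P → ℝ, (∀ a ∈ S, φ a = lam a) ∧ φ p₀ = φ q₀ ∧
      ∀ r s, r ⋖ s → φ r < φ s ∨ (r = p₀ ∧ s = q₀) := by
  -- the order of `P` with `p₀` and `q₀` glued together
  let R : P → P → Prop := fun x y => x ≤ y ∨ (x ≤ q₀ ∧ p₀ ≤ y)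
  have hrefl : ∀ x, R x x := fun x => .inl le_rfl
  have htrans : ∀ x y z, R x y → R y z → R x z := by
    rintro x y z (hxy | ⟨hxq, hpy⟩) (hyz | ⟨hyq, hpz⟩)
    exacts [.inl (hxy.trans hyz), .inr ⟨hxy.trans hyq, hpz⟩, .inr ⟨hxq, hpy.trans hyz⟩,
      .inr ⟨hxq, hpz⟩]
  have hbelow : ∀ x, ∃ a ∈ S, R a x := fun x => by
    obtain ⟨a, hax, ha⟩ := exists_minimal_le_of_wellFoundedLT (fun _ => True) x trivial
    exact ⟨a, hmin a (minimal_true.1 ha), .inl hax⟩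
  have hlam : ∀ a ∈ S, ∀ b ∈ S, R a b → a ≠ b → lam a < lam b := by
    rintro a ha b hb (hab | ⟨haq, hpb⟩) hne
    · exact hreg.lt_of_lt ha hb (hab.lt_of_ne hne)
    · exact (hreg p₀ q₀ hcov a ha b hb haq hpb).resolve_left hne
  obtain ⟨φ, hφS, hφ⟩ := exists_strict_extension R hrefl htrans S lam hbelow hlam
  refine ⟨φ, hφS, le_antisymm (hφ _ _ (.inl hcov.le)).1 (hφ _ _ (.inr ⟨le_rfl, le_rfl⟩)).1,
    fun r s hrs => ?_⟩
  by_cases hsr : R s r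
  · rcases hsr with hsr | ⟨hsq, hpr⟩
    · exact absurd hsr hrs.lt.not_ge
    · right
      constructor
      · exact (hcov.eq_or_eq hpr (hrs.le.trans hsq)).resolve_right
          fun h => (hrs.lt.trans_le hsq).ne h
      · exact (hcov.eq_or_eq (hpr.trans hrs.le) hsq).resolve_left
          fun h => (hpr.trans_lt hrs.lt).ne' h
  · exact .inl ((hφ r s (.inl hrs.le)).2 hsr)

theorem strictMono_extFun [Fintype {p : P // p ∉ S}] [LocallyFiniteOrder P]
    (hreg : IsRegularMarking S lam) {u : {p : P // p ∉ S} → ℝ}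
    (hu : u ∈ interior (MOproj S lam)) : StrictMono (extFun S lam u) := by
  intro p q hpq
  by_cases hS : p ∈ S ∧ q ∈ S
  · rw [extFun_of_mem u hS.1, extFun_of_mem u hS.2]
    exact hreg.lt_of_lt hS.1 hS.2 hpq
  -- moving the free ones among `p`, `q` towards each other keeps `u` inside `O(P, λ)`
  obtain ⟨t, ht, hmem⟩ :=
    exists_pos_add_smul_mem_of_mem_interior hu (freeIndicator S p - freeIndicator S q)
  have := mem_MOproj_iff.1 hmem hpq.le
  rw [extFun_add_smul] at this
  by_cases hp : p ∈ S <;> by_cases hq : q ∈ S <;>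
    simp_all [extFun, freeIndicator, hpq.ne, hpq.ne'] <;> linarith

theorem mem_extremePoints_polarDual [Fintype P] [Fintype {p : P // p ∉ S}]
    [LocallyFiniteOrder P] (hreg : IsRegularMarking S lam)
    (hmin : ∀ p : P, IsMin p → p ∈ S) {u : {p : P // p ∉ S} → ℝ} {p₀ q₀ : P} (hcov : p₀ ⋖ q₀)
    (hu : extFun S lam u p₀ < extFun S lam u q₀) :
    (extFun S lam u q₀ - extFun S lam u p₀)⁻¹ • (freeIndicator S p₀ - freeIndicator S q₀) ∈
      (polarDual ((· - u) '' MOproj S lam)).extremePoints ℝ := by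
  set d := extFun S lam u q₀ - extFun S lam u p₀
  have hd : d ≠ 0 := (sub_pos.2 hu).ne'
  set α := d⁻¹ • (freeIndicator S p₀ - freeIndicator S q₀)
  have hα : ∀ z, α ⬝ᵥ z = d⁻¹ * (extFun S 0 z p₀ - extFun S 0 z q₀) := fun z => by
    rw [smul_dotProduct, sub_dotProduct, freeIndicator_dotProduct, freeIndicator_dotProduct,
      smul_eq_mul]
  have hαu : ∀ x, α ⬝ᵥ (x - u) = d⁻¹ * (extFun S lam x p₀ - extFun S lam x q₀) + 1 := by
    intro x
    rw [hα, extFun_sub lam]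
    field_simp
    simp only [Pi.sub_apply, d]
    ring
  refine mem_extremePoints_polarDual_of_span_eq_top ?_ ?_
  · rintro _ ⟨x, hx, rfl⟩
    change α ⬝ᵥ (x - u) ≤ 1
    rw [hαu]
    have := sub_nonpos.2 (hx _ _ hcov.le)
    have : 0 < d⁻¹ := inv_pos.2 (sub_pos.2 hu)
    nlinarith
  obtain ⟨φ, hφS, hφeq, hφ⟩ := hreg.exists_facet_point hmin hcov
  set x₀ : {p : P // p ∉ S} → ℝ := fun r => φ r
  have hx₀ : extFun S lam x₀ = φ := extFun_restrict hφS
  have hx₀α : α ⬝ᵥ (x₀ - u) = 1 := by simp [hαu, hx₀, hφeq]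
  refine Submodule.span_eq_top_of_add_smul_mem (dotProductEquiv ℝ _ α) (y₀ := x₀ - u)
    ⟨⟨x₀, ?_, rfl⟩, hx₀α⟩ (by simp [hx₀α]) fun w hw => ?_
  · rw [mem_MOproj_iff, hx₀, monotone_iff_forall_covBy]
    intro r s hrs
    rcases hφ r s hrs with h | ⟨rfl, rfl⟩
    exacts [h.le, hφeq.le]
  have hw : extFun S 0 w p₀ = extFun S 0 w q₀ := by
    simpa [hα, hd, sub_eq_zero] using hw
  obtain ⟨t, ht, hmono⟩ := exists_pos_monotone_add_smul (η := extFun S 0 w) fun r s hrs =>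
    (hφ r s hrs).imp_right fun ⟨hr, hs⟩ => hr ▸ hs ▸ ⟨hφeq, hw⟩
  refine ⟨t, ht.ne', ⟨x₀ + t • w, ?_, add_sub_right_comm _ _ _⟩, ?_⟩
  · rwa [mem_MOproj_iff, extFun_add_smul, hx₀]
  · rw [dotProduct_add, hx₀α, dotProduct_smul, hα, hw]
    simp

end IsRegularMarking

end MarkedOrderPolytope

theorem mo_not_reflexive_general {P : Type*} [PartialOrder P] [Fintype P]
    (Pstar : Set P) [Fintype {p : P // p ∉ Pstar}] (lam : P → ℝ)
    (hmin : ∀ p : P, IsMin p → p ∈ Pstar)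
    (hreg : ∀ p q : P, p ⋖ q → ∀ a ∈ Pstar, ∀ b ∈ Pstar, a ≤ q → p ≤ b →
      a = b ∨ lam a < lam b)
    (hgap : ∃ a ∈ Pstar, ∃ b ∈ Pstar, a < b ∧
      ∀ l : List P, List.Chain' (· ⋖ ·) (a :: (l ++ [b])) →
        ((l.length : ℝ) + 1) < lam b - lam a)
    (u : {p : P // p ∉ Pstar} → ℝ)
    (hu : {x | x ∈ interior (MOproj Pstar lam) ∧ IsLat x} = {u}) :
    ¬ ∃ A : Finset ({p : P // p ∉ Pstar} → ℝ), (∀ α ∈ A, IsLat α) ∧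
        polarDual ((fun x => x - u) '' MOproj Pstar lam) =
          convexHull ℝ (A : Set ({p : P // p ∉ Pstar} → ℝ)) := by
  rintro ⟨A, hAlat, hdual⟩
  let : LocallyFiniteOrder P := Fintype.toLocallyFiniteOrder
  have hreg : IsRegularMarking Pstar lam := hreg
  have hu : u ∈ interior (MOproj Pstar lam) := ((Set.ext_iff.1 hu u).2 rfl).1
  set v := extFun Pstar lam u
  obtain ⟨a, ha, b, hb, hab, hlong⟩ := hgap
  obtain ⟨p₀, q₀, hcov, hd⟩ := (transGen_covBy_of_lt hab).exists_one_lt_sub (f := v)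
    fun l hl => by simpa only [v, extFun_of_mem u ha, extFun_of_mem u hb] using hlong l hl
  have hext := hreg.mem_extremePoints_polarDual hmin hcov (hreg.strictMono_extFun hu hcov.lt)
  rw [hdual] at hext
  have hlat := hAlat _ (extremePoints_convexHull_subset hext)
  rcases hreg.not_mem_or_not_mem_of_covBy hcov with hp | hq
  · obtain ⟨n, hn⟩ := hlat ⟨p₀, hp⟩
    simp only [Pi.smul_apply, Pi.sub_apply, freeIndicator, ↓reduceIte, hcov.ne, sub_zero,
      smul_eq_mul, mul_one] at hn
    exact inv_ne_intCast hd n hn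
  · obtain ⟨n, hn⟩ := hlat ⟨q₀, hq⟩
    simp only [Pi.smul_apply, Pi.sub_apply, freeIndicator, hcov.ne', ↓reduceIte, zero_sub,
      smul_eq_mul, mul_neg, mul_one] at hn
    exact inv_ne_intCast hd (-n) (by push_cast; linarith)

/-- let `(P,λ)` be integral and regular with `min(P) ∪ max(P) ⊆ P*`, `P`
ranked, but `λ` not arising from a rank function: some `a < b` in `P*` have
`λ(b) - λ(a)` strictly larger than the length of every saturated chain from `a` to `b`.
If `O(P,λ)` has a unique interior lattice point `u`, then `O(P,λ) - u` is not reflexive: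
its polar dual is not a lattice polytope. -/
theorem mo_not_reflexive {P : Type*} [PartialOrder P] [Fintype P]
    (Pstar : Set P) [Fintype {p : P // p ∉ Pstar}] (lam : P → ℝ)
    (hmin : ∀ p : P, IsMin p → p ∈ Pstar)
    (hmax : ∀ p : P, IsMax p → p ∈ Pstar)
    (hlam : MonotoneOn lam Pstar)
    (hint : ∀ a ∈ Pstar, ∃ n : ℤ, lam a = n)
    (hreg : ∀ p q : P, p ⋖ q → ∀ a ∈ Pstar, ∀ b ∈ Pstar, a ≤ q → p ≤ b →
      a = b ∨ lam a < lam b)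
    (hranked : ∃ r : P → ℤ, ∀ p q : P, p ⋖ q → r p = r q - 1)
    (hgap : ∃ a ∈ Pstar, ∃ b ∈ Pstar, a < b ∧
      ∀ l : List P, List.Chain' (· ⋖ ·) (a :: (l ++ [b])) →
        ((l.length : ℝ) + 1) < lam b - lam a)
    (u : {p : P // p ∉ Pstar} → ℝ)
    (hu : {x | x ∈ interior (MOproj Pstar lam) ∧ IsLat x} = {u}) :
    ¬ ∃ A : Finset ({p : P // p ∉ Pstar} → ℝ), (∀ α ∈ A, IsLat α) ∧
        polarDual ((fun x => x - u) '' MOproj Pstar lam) =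
          convexHull ℝ (A : Set ({p : P // p ∉ Pstar} → ℝ)) :=
  mo_not_reflexive_general Pstar lam hmin hreg hgap u hu
end

section
/- Let P* be a finite poset and f: P* → ℝ order-preserving with f(P*) = {c_0 < ⋯ < c_k}. Define the chain of order ideals I_f = (f^{-1}((−∞,c_0]), …, f^{-1}((−∞,c_{k−1}])). Then for any chain of order ideals I in P*, f ∈ L(P*, I) if and only if I_f is a coarsening of I (i.e., I_f is obtained from I by deleting some ideals). -/
/-- for an order-preserving `f : P* → ℝ` with image `{c₀ < ⋯ < c_m}` and
associated chain of ideals `I_f = (f⁻¹((-∞,c₀]), …, f⁻¹((-∞,c_{m-1}]))`, and any chain of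
proper nonempty order ideals `I` in `P*`, one has `f ∈ L(P*, I)` iff `I_f` is a coarsening
of `I`, i.e., every ideal of `I_f` occurs among the ideals of `I`. -/
theorem cone_membership_iff_coarsening {P : Type*} [PartialOrder P] [Fintype P]
    (Pstar : Set P) (f : P → ℝ) (hf : MonotoneOn f Pstar)
    (m : ℕ) (cf : ℕ → ℝ) (hcf : ∀ i < m, cf i < cf (i + 1))
    (him : f '' Pstar = cf '' Set.Iic m)
    (k : ℕ) (I : ℕ → Set P)
    (hI0 : I 0 = ∅) (hIk : I (k + 1) = Pstar)
    (hsub : ∀ j, I j ⊆ Pstar)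
    (hchain : ∀ j ≤ k, I j ⊂ I (j + 1))
    (hideal : ∀ j, ∀ a ∈ Pstar, ∀ b ∈ I j, a ≤ b → a ∈ I j) :
    InConeChain Pstar I k f ↔
      ∀ j < m, ∃ j', 1 ≤ j' ∧ j' ≤ k ∧ {a ∈ Pstar | f a ≤ cf j} = I j' := by
  classical
  -- monotonicity of the chain of ideals
  have Imono : ∀ t ≤ k + 1, ∀ s ≤ t, I s ⊆ I t := by
    intro t
    induction t with
    | zero => intro _ s hs; interval_cases s; exact fun x hx => hx
    | succ n ih =>
      intro hn s hs
      rcases Nat.lt_or_ge s (n + 1) with h | h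
      · exact (ih (by omega) s (by omega)).trans (hchain n (by omega)).subset
      · have : s = n + 1 := le_antisymm hs h
        subst this; exact fun x hx => hx
  -- monotonicity of cf
  have cfle : ∀ i j, i ≤ j → j ≤ m → cf i ≤ cf j := by
    intro i j hij
    induction j with
    | zero => intro _; interval_cases i; exact le_refl _
    | succ n ih =>
      intro hn
      rcases Nat.lt_or_ge i (n + 1) with h | h
      · exact (ih (by omega) (by omega)).trans (hcf n (by omega)).le
      · have : i = n + 1 := le_antisymm hij h
        subst this; exact le_refl _
  have cflt : ∀ i j, i < j → j ≤ m → cf i < cf j := by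
    intro i j hij hjm
    cases j with
    | zero => omega
    | succ n => exact lt_of_le_of_lt (cfle i n (by omega) (by omega)) (hcf n (by omega))
  -- image facts
  have himem : ∀ a ∈ Pstar, ∃ i ≤ m, cf i = f a := by
    intro a ha
    have : f a ∈ cf '' Set.Iic m := him ▸ ⟨a, ha, rfl⟩
    obtain ⟨i, hi, hfi⟩ := this
    exact ⟨i, hi, hfi⟩
  have hbound : ∀ a ∈ Pstar, f a ≤ cf m := by
    intro a ha
    obtain ⟨i, hi, hfi⟩ := himem a ha
    exact hfi ▸ cfle i m hi le_rfl
  have hattain : ∀ i ≤ m, ∃ a ∈ Pstar, f a = cf i := by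
    intro i hi
    have : cf i ∈ f '' Pstar := him ▸ ⟨i, hi, rfl⟩
    obtain ⟨a, ha, hfa⟩ := this
    exact ⟨a, ha, hfa⟩
  -- every element of Pstar lies in a unique block
  have block : ∀ a ∈ Pstar, ∃ t ≤ k, a ∈ I (t + 1) \ I t := by
    intro a ha
    have hex : ∃ t, a ∈ I (t + 1) := ⟨k, hIk ▸ ha⟩
    refine ⟨Nat.find hex, ?_, Nat.find_spec hex, ?_⟩
    · exact Nat.find_le (hIk ▸ ha)
    · rcases Nat.eq_zero_or_pos (Nat.find hex) with h | h
      · rw [h, hI0]; exact Set.notMem_empty a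
      · obtain ⟨s, hs⟩ := Nat.exists_eq_succ_of_ne_zero (Nat.pos_iff_ne_zero.mp h)
        rw [hs]
        exact Nat.find_min hex (by omega)
  constructor
  · -- forward direction
    rintro ⟨hmono, hconst, hle⟩ j hjm
    -- block representatives
    have hne : ∀ t, t ≤ k → ∃ a, a ∈ I (t + 1) \ I t := by
      intro t ht
      obtain ⟨x, hx1, hx2⟩ := Set.exists_of_ssubset (hchain t ht)
      exact ⟨x, hx1, hx2⟩
    have : Nonempty P := ⟨(hne 0 (Nat.zero_le k)).choose⟩
    choose! rep hrep using hne
    have vconst : ∀ t ≤ k, ∀ a ∈ I (t + 1) \ I t, f a = f (rep t) :=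
      fun t ht a haa => hconst t ht a haa (rep t) (hrep t ht)
    have vmono : ∀ t t', t ≤ t' → t' ≤ k → f (rep t) ≤ f (rep t') :=
      fun t t' htt' ht'k =>
        hle t t' htt' ht'k (rep t) (hrep t (le_trans htt' ht'k)) (rep t') (hrep t' ht'k)
    set Pr : ℕ → Prop := fun t => f (rep t) ≤ cf j with hPr
    -- some block has value ≤ cf j
    obtain ⟨x, hxP, hfx⟩ := hattain j (le_of_lt hjm)
    obtain ⟨t₀, ht₀k, hxt₀⟩ := block x hxP
    have ht₀ : Pr t₀ := by
      have := vconst t₀ ht₀k x hxt₀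
      simp only [hPr]
      rw [← this, hfx]
    set s := Nat.findGreatest Pr k with hsdef
    have hsk : s ≤ k := Nat.findGreatest_le k
    have hsP : Pr s := Nat.findGreatest_spec ht₀k ht₀
    -- some block has value cf m > cf j
    obtain ⟨y, hyP, hfy⟩ := hattain m le_rfl
    obtain ⟨t₁, ht₁k, hyt₁⟩ := block y hyP
    have ht₁v : f (rep t₁) = cf m := by rw [← vconst t₁ ht₁k y hyt₁, hfy]
    have hskk : s < k := by
      have ht₁not : ¬ Pr t₁ := by
        simp only [hPr, ht₁v, not_le]
        exact cflt j m hjm le_rfl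
      have : s < t₁ := by
        by_contra h
        push_neg at h
        exact ht₁not (le_trans (vmono t₁ s h hsk) hsP)
      omega
    refine ⟨s + 1, by omega, by omega, ?_⟩
    ext a
    simp only [Set.mem_setOf_eq]
    constructor
    · rintro ⟨haP, hfa⟩
      obtain ⟨t, htk, hat⟩ := block a haP
      have hPt : Pr t := by
        simp only [hPr]
        rw [← vconst t htk a hat]
        exact hfa
      have : t ≤ s := Nat.le_findGreatest htk hPt
      exact Imono (s + 1) (by omega) (t + 1) (by omega) hat.1
    · intro ha
      have haP : a ∈ Pstar := hsub _ ha
      obtain ⟨t, htk, hat⟩ := block a haP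
      have hts : t ≤ s := by
        by_contra h
        push_neg at h
        exact hat.2 (Imono t (by omega) (s + 1) (by omega) ha)
      refine ⟨haP, ?_⟩
      rw [vconst t htk a hat]
      exact le_trans (vmono t s hts hsk) hsP
  · -- backward direction
    intro H
    have key : ∀ t t', t ≤ t' → t' ≤ k → ∀ a ∈ I (t + 1), ∀ b ∈ Pstar, b ∉ I t' →
        f a ≤ f b := by
      intro t t' htt' ht'k a ha b hbP hbt'
      by_contra hlt
      push_neg at hlt
      obtain ⟨i, him', hfb⟩ := himem b hbP
      have haP : a ∈ Pstar := hsub _ ha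
      have him2 : i < m := by
        rcases Nat.lt_or_ge i m with h | h
        · exact h
        · exfalso
          have : i = m := le_antisymm him' h
          subst this
          exact absurd (hbound a haP) (not_le.mpr (hfb ▸ hlt))
      obtain ⟨j', h1, h2, h3⟩ := H i him2
      have hbL : b ∈ I j' := by
        rw [← h3]; exact ⟨hbP, hfb.ge⟩
      have haL : a ∉ I j' := by
        rw [← h3]
        rintro ⟨-, hfa⟩
        have h4 := lt_of_lt_of_le hlt hfa
        rw [← hfb] at h4
        exact lt_irrefl _ h4
      have ht'j' : t' < j' := by
        by_contra h
        push_neg at h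
        exact hbt' (Imono t' (by omega) j' h hbL)
      exact haL (Imono j' (by omega) (t + 1) (by omega) ha)
    refine ⟨hf, ?_, ?_⟩
    · intro t htk a haa b hbb
      exact le_antisymm (key t t le_rfl htk a haa.1 b (hsub _ hbb.1) hbb.2)
        (key t t le_rfl htk b hbb.1 a (hsub _ haa.1) haa.2)
    · intro t t' htt' ht'k a haa b hbb
      exact key t t' htt' ht'k a haa.1 b (hsub _ hbb.1) hbb.2
end
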